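/- arXiv:2505.10508 — 3 statements merged into one kernel-verified Lean document; each statement's English description precedes it below -/
import Mathlib

section
/- Let μ > 0, λ ≥ 0 and define 𝕊(M) := μ(M + Mᵀ − (2/3)(tr M) I) + λ(tr M) I for 3×3 matrices M. Let η : Γ → (0,∞) be a bounded continuous function on the two-dimensional flat torus Γ, and let u = (u₁,u₂,u₃) : Γ × [0,∞) → ℝ³ be continuously differentiable such that u₁ and u₂ are smooth and compactly supported in the open set Ω^η, and u₃(x,y,0) = 0 for all (x,y) ∈ Γ. Then there exists a constant C > 0 depending only on μ such that ∫_{Ω^η}(|u|² + |∇u|²) ≤ C (1 + sup_Γ η)² ∫_{Ω^η} 𝕊(∇u) : ∇u, where Ω^η := {(x,y,z) : (x,y) ∈ Γ, 0 < z < η(x,y)}. -/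
open MeasureTheory Real Set Matrix

noncomputable section

/-- Fundamental domain of the two-dimensional flat torus `Γ = (ℝ/ℤ)²`. -/
def Tfund : Set (ℝ × ℝ) := Set.Ioo (0 : ℝ) 1 ×ˢ Set.Ioo (0 : ℝ) 1

/-- A function on `ℝ²` represents a function on the torus iff it is
`1`-periodic in each variable. -/
def PeriodicTorus (f : ℝ × ℝ → ℝ) : Prop :=
  (∀ x y : ℝ, f (x + 1, y) = f (x, y)) ∧ (∀ x y : ℝ, f (x, y + 1) = f (x, y))

/-- The fluid domain over one fundamental domain. -/
def OmegaSet (η : ℝ × ℝ → ℝ) : Set ((ℝ × ℝ) × ℝ) :=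
  {p | p.1 ∈ Tfund ∧ 0 < p.2 ∧ p.2 < η p.1}

/-- The periodic (full) fluid domain `{0 < z < η(x,y)}`, an open subset of `ℝ³`
representing the open set `Ω^η` in the torus. -/
def OmegaFull (η : ℝ × ℝ → ℝ) : Set ((ℝ × ℝ) × ℝ) :=
  {p | 0 < p.2 ∧ p.2 < η p.1}

/-- Partial derivative in the first horizontal variable. -/
def pdX (f : (ℝ × ℝ) × ℝ → ℝ) (p : (ℝ × ℝ) × ℝ) : ℝ :=
  deriv (fun t => f ((t, p.1.2), p.2)) p.1.1

/-- Partial derivative in the second horizontal variable. -/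
def pdY (f : (ℝ × ℝ) × ℝ → ℝ) (p : (ℝ × ℝ) × ℝ) : ℝ :=
  deriv (fun t => f ((p.1.1, t), p.2)) p.1.2

/-- Partial derivative in the vertical variable. -/
def pdZ (f : (ℝ × ℝ) × ℝ → ℝ) (p : (ℝ × ℝ) × ℝ) : ℝ :=
  deriv (fun t => f (p.1, t)) p.2

/-- The Jacobian matrix of a vector field `u : Γ × [0,∞) → ℝ³`. -/
def jac3 (u : (ℝ × ℝ) × ℝ → Fin 3 → ℝ) (p : (ℝ × ℝ) × ℝ) :
    Matrix (Fin 3) (Fin 3) ℝ :=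
  fun i j =>
    ![pdX (fun q => u q i) p, pdY (fun q => u q i) p, pdZ (fun q => u q i) p] j

/-- The viscous stress tensor
`𝕊(M) = μ (M + Mᵀ − (2/3)(tr M) I) + λ (tr M) I` for `3×3` matrices. -/
def Svisc (μ lam : ℝ) (M : Matrix (Fin 3) (Fin 3) ℝ) : Matrix (Fin 3) (Fin 3) ℝ :=
  μ • (M + Mᵀ - ((2 / 3 : ℝ) * M.trace) • (1 : Matrix (Fin 3) (Fin 3) ℝ)) +
    (lam * M.trace) • (1 : Matrix (Fin 3) (Fin 3) ℝ)

/-- Frobenius inner product of `3×3` matrices. -/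
def frob (A B : Matrix (Fin 3) (Fin 3) ℝ) : ℝ :=
  ∑ i : Fin 3, ∑ j : Fin 3, A i j * B i j

open MeasureTheory Real Set Matrix Filter Topology

namespace KornAux

abbrev E3 := (ℝ × ℝ) × ℝ

def vX : E3 := ((1, 0), 0)
def vY : E3 := ((0, 1), 0)
def vZ : E3 := ((0, 0), 1)

lemma hasDerivAt_curveX (p : E3) : HasDerivAt (fun t : ℝ => (((t, p.1.2), p.2) : E3)) vX p.1.1 :=
  (((hasDerivAt_id _).prodMk (hasDerivAt_const _ _)).prodMk (hasDerivAt_const _ _))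

lemma hasDerivAt_curveY (p : E3) : HasDerivAt (fun t : ℝ => (((p.1.1, t), p.2) : E3)) vY p.1.2 :=
  (((hasDerivAt_const _ _).prodMk (hasDerivAt_id _)).prodMk (hasDerivAt_const _ _))

lemma hasDerivAt_curveZ (p : E3) : HasDerivAt (fun t : ℝ => ((p.1, t) : E3)) vZ p.2 :=
  ((hasDerivAt_const _ _).prodMk (hasDerivAt_id _))

lemma hasDerivAt_sliceX {f : E3 → ℝ} {p : E3} (hf : DifferentiableAt ℝ f p) :
    HasDerivAt (fun t => f ((t, p.1.2), p.2)) (fderiv ℝ f p vX) p.1.1 := by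
  have := hf.hasFDerivAt.comp_hasDerivAt p.1.1 (by simpa using hasDerivAt_curveX p)
  exact this

lemma hasDerivAt_sliceY {f : E3 → ℝ} {p : E3} (hf : DifferentiableAt ℝ f p) :
    HasDerivAt (fun t => f ((p.1.1, t), p.2)) (fderiv ℝ f p vY) p.1.2 := by
  have := hf.hasFDerivAt.comp_hasDerivAt p.1.2 (by simpa using hasDerivAt_curveY p)
  exact this

lemma hasDerivAt_sliceZ {f : E3 → ℝ} {p : E3} (hf : DifferentiableAt ℝ f p) :
    HasDerivAt (fun t => f (p.1, t)) (fderiv ℝ f p vZ) p.2 := by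
  have := hf.hasFDerivAt.comp_hasDerivAt p.2 (by simpa using hasDerivAt_curveZ p)
  exact this

lemma pdX_eq {f : E3 → ℝ} {p : E3} (hf : DifferentiableAt ℝ f p) :
    pdX f p = fderiv ℝ f p vX := (hasDerivAt_sliceX hf).deriv

lemma pdY_eq {f : E3 → ℝ} {p : E3} (hf : DifferentiableAt ℝ f p) :
    pdY f p = fderiv ℝ f p vY := (hasDerivAt_sliceY hf).deriv

lemma pdZ_eq {f : E3 → ℝ} {p : E3} (hf : DifferentiableAt ℝ f p) :
    pdZ f p = fderiv ℝ f p vZ := (hasDerivAt_sliceZ hf).deriv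

lemma hasDerivAt_sliceX' {f : E3 → ℝ} {p : E3} (hf : DifferentiableAt ℝ f p) :
    HasDerivAt (fun t => f ((t, p.1.2), p.2)) (pdX f p) p.1.1 :=
  (pdX_eq hf) ▸ hasDerivAt_sliceX hf

lemma hasDerivAt_sliceY' {f : E3 → ℝ} {p : E3} (hf : DifferentiableAt ℝ f p) :
    HasDerivAt (fun t => f ((p.1.1, t), p.2)) (pdY f p) p.1.2 :=
  (pdY_eq hf) ▸ hasDerivAt_sliceY hf

lemma hasDerivAt_sliceZ' {f : E3 → ℝ} {p : E3} (hf : DifferentiableAt ℝ f p) :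
    HasDerivAt (fun t => f (p.1, t)) (pdZ f p) p.2 :=
  (pdZ_eq hf) ▸ hasDerivAt_sliceZ hf

end KornAux

open MeasureTheory Real Set Matrix Filter Topology
namespace KornAux

lemma pdX_eventually_zero {f : E3 → ℝ} {p : E3} (h : ∀ᶠ q in 𝓝 p, f q = 0) :
    pdX f p = 0 := by
  have hc : ContinuousAt (fun t : ℝ => (((t, p.1.2), p.2) : E3)) p.1.1 :=
    (hasDerivAt_curveX p).continuousAt
  have h2 : (fun t => f ((t, p.1.2), p.2)) =ᶠ[𝓝 p.1.1] (fun _ => (0:ℝ)) := by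
    have := hc.tendsto
    rw [show (((p.1.1, p.1.2), p.2) : E3) = p from rfl] at this
    exact Filter.Eventually.mono (this.eventually h) (fun t ht => ht)
  rw [pdX, h2.deriv_eq, deriv_const]

lemma pdY_eventually_zero {f : E3 → ℝ} {p : E3} (h : ∀ᶠ q in 𝓝 p, f q = 0) :
    pdY f p = 0 := by
  have hc : ContinuousAt (fun t : ℝ => (((p.1.1, t), p.2) : E3)) p.1.2 :=
    (hasDerivAt_curveY p).continuousAt
  have h2 : (fun t => f ((p.1.1, t), p.2)) =ᶠ[𝓝 p.1.2] (fun _ => (0:ℝ)) := by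
    have := hc.tendsto
    rw [show (((p.1.1, p.1.2), p.2) : E3) = p from rfl] at this
    exact Filter.Eventually.mono (this.eventually h) (fun t ht => ht)
  rw [pdY, h2.deriv_eq, deriv_const]

lemma pdZ_eventually_zero {f : E3 → ℝ} {p : E3} (h : ∀ᶠ q in 𝓝 p, f q = 0) :
    pdZ f p = 0 := by
  have hc : ContinuousAt (fun t : ℝ => ((p.1, t) : E3)) p.2 :=
    (hasDerivAt_curveZ p).continuousAt
  have h2 : (fun t => f (p.1, t)) =ᶠ[𝓝 p.2] (fun _ => (0:ℝ)) := by
    have := hc.tendsto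
    rw [show ((p.1, p.2) : E3) = p from rfl] at this
    exact Filter.Eventually.mono (this.eventually h) (fun t ht => ht)
  rw [pdZ, h2.deriv_eq, deriv_const]

/-- vanishing off a closed set -/
lemma pd_zero_of_zero_off_closed {f : E3 → ℝ} {K : Set E3} (hK : IsClosed K)
    (h0 : ∀ q ∉ K, f q = 0) {p : E3} (hp : p ∉ K) :
    f p = 0 ∧ pdX f p = 0 ∧ pdY f p = 0 ∧ pdZ f p = 0 := by
  have hev : ∀ᶠ q in 𝓝 p, f q = 0 := by
    filter_upwards [hK.isOpen_compl.mem_nhds hp] with q hq using h0 q hq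
  exact ⟨h0 p hp, pdX_eventually_zero hev, pdY_eventually_zero hev, pdZ_eventually_zero hev⟩

/-- product rules -/
lemma pdX_mul {f g : E3 → ℝ} {p : E3} (hf : DifferentiableAt ℝ f p)
    (hg : DifferentiableAt ℝ g p) :
    pdX (fun q => f q * g q) p = pdX f p * g p + f p * pdX g p := by
  have := ((hasDerivAt_sliceX' hf).mul (hasDerivAt_sliceX' hg)).deriv
  exact this

lemma pdY_mul {f g : E3 → ℝ} {p : E3} (hf : DifferentiableAt ℝ f p)
    (hg : DifferentiableAt ℝ g p) :
    pdY (fun q => f q * g q) p = pdY f p * g p + f p * pdY g p := by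
  have := ((hasDerivAt_sliceY' hf).mul (hasDerivAt_sliceY' hg)).deriv
  exact this

lemma pdZ_mul {f g : E3 → ℝ} {p : E3} (hf : DifferentiableAt ℝ f p)
    (hg : DifferentiableAt ℝ g p) :
    pdZ (fun q => f q * g q) p = pdZ f p * g p + f p * pdZ g p := by
  have := ((hasDerivAt_sliceZ' hf).mul (hasDerivAt_sliceZ' hg)).deriv
  exact this

end KornAux

open MeasureTheory Real Set Matrix Filter Topology
namespace KornAux

lemma fderiv_apply_const {f : E3 → ℝ} (hf : ContDiff ℝ (⊤ : ℕ∞) f) (p v w : E3) :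
    fderiv ℝ (fun q => fderiv ℝ f q w) p v = fderiv ℝ (fderiv ℝ f) p v w := by
  have hc : DifferentiableAt ℝ (fderiv ℝ f) p :=
    ((hf.fderiv_right (m := 1) (by exact WithTop.coe_le_coe.mpr le_top)).differentiable one_ne_zero) p
  have := fderiv_clm_apply (𝕜 := ℝ) hc (differentiableAt_const w)
  rw [this]
  simp

lemma snd_symm {f : E3 → ℝ} (hf : ContDiff ℝ (⊤ : ℕ∞) f) (p v w : E3) :
    fderiv ℝ (fun q => fderiv ℝ f q w) p v = fderiv ℝ (fun q => fderiv ℝ f q v) p w := by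
  rw [fderiv_apply_const hf, fderiv_apply_const hf]
  exact second_derivative_symmetric
    (fun y => ((hf.differentiable (by simp)) y).hasFDerivAt)
    ((((hf.fderiv_right (m := 1) (by exact WithTop.coe_le_coe.mpr le_top)).differentiable one_ne_zero) p).hasFDerivAt) v w

lemma diff_pd_apply {f : E3 → ℝ} (hf : ContDiff ℝ (⊤ : ℕ∞) f) (w : E3) :
    ContDiff ℝ (⊤ : ℕ∞) (fun q => fderiv ℝ f q w) :=
  (hf.fderiv_right (by simp)).clm_apply contDiff_const

lemma pdX_of_fun_eq {f g : E3 → ℝ} (h : ∀ q, f q = g q) (p : E3) : pdX f p = pdX g p := by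
  have : f = g := funext h; rw [this]
lemma pdY_of_fun_eq {f g : E3 → ℝ} (h : ∀ q, f q = g q) (p : E3) : pdY f p = pdY g p := by
  have : f = g := funext h; rw [this]
lemma pdZ_of_fun_eq {f g : E3 → ℝ} (h : ∀ q, f q = g q) (p : E3) : pdZ f p = pdZ g p := by
  have : f = g := funext h; rw [this]

lemma pdX_congr_fderiv {f : E3 → ℝ} (hf : ContDiff ℝ (⊤ : ℕ∞) f) (w : E3) (p : E3) :
    pdX (fun q => fderiv ℝ f q w) p = fderiv ℝ (fun q => fderiv ℝ f q w) p vX :=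
  pdX_eq (((diff_pd_apply hf w).differentiable (by simp)) p)
lemma pdY_congr_fderiv {f : E3 → ℝ} (hf : ContDiff ℝ (⊤ : ℕ∞) f) (w : E3) (p : E3) :
    pdY (fun q => fderiv ℝ f q w) p = fderiv ℝ (fun q => fderiv ℝ f q w) p vY :=
  pdY_eq (((diff_pd_apply hf w).differentiable (by simp)) p)
lemma pdZ_congr_fderiv {f : E3 → ℝ} (hf : ContDiff ℝ (⊤ : ℕ∞) f) (w : E3) (p : E3) :
    pdZ (fun q => fderiv ℝ f q w) p = fderiv ℝ (fun q => fderiv ℝ f q w) p vZ :=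
  pdZ_eq (((diff_pd_apply hf w).differentiable (by simp)) p)

lemma pdX_pdZ_comm {f : E3 → ℝ} (hf : ContDiff ℝ (⊤ : ℕ∞) f) (p : E3) :
    pdX (pdZ f) p = pdZ (pdX f) p := by
  have hdf := hf.differentiable (by simp)
  rw [pdX_of_fun_eq (g := fun q => fderiv ℝ f q vZ) (fun q => pdZ_eq (hdf q)) p,
      pdZ_of_fun_eq (g := fun q => fderiv ℝ f q vX) (fun q => pdX_eq (hdf q)) p,
      pdX_congr_fderiv hf, pdZ_congr_fderiv hf]
  exact snd_symm hf p vX vZ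

lemma pdY_pdZ_comm {f : E3 → ℝ} (hf : ContDiff ℝ (⊤ : ℕ∞) f) (p : E3) :
    pdY (pdZ f) p = pdZ (pdY f) p := by
  have hdf := hf.differentiable (by simp)
  rw [pdY_of_fun_eq (g := fun q => fderiv ℝ f q vZ) (fun q => pdZ_eq (hdf q)) p,
      pdZ_of_fun_eq (g := fun q => fderiv ℝ f q vY) (fun q => pdY_eq (hdf q)) p,
      pdY_congr_fderiv hf, pdZ_congr_fderiv hf]
  exact snd_symm hf p vY vZ

lemma pdX_pdY_comm {f : E3 → ℝ} (hf : ContDiff ℝ (⊤ : ℕ∞) f) (p : E3) :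
    pdX (pdY f) p = pdY (pdX f) p := by
  have hdf := hf.differentiable (by simp)
  rw [pdX_of_fun_eq (g := fun q => fderiv ℝ f q vY) (fun q => pdY_eq (hdf q)) p,
      pdY_of_fun_eq (g := fun q => fderiv ℝ f q vX) (fun q => pdX_eq (hdf q)) p,
      pdX_congr_fderiv hf, pdY_congr_fderiv hf]
  exact snd_symm hf p vX vY

end KornAux

open MeasureTheory Real Set Matrix Filter Topology
namespace KornAux

def Hopen : Set E3 := {p : E3 | 0 < p.2}
def Hplane : Set E3 := {p : E3 | 0 ≤ p.2}

lemma isOpen_Hopen : IsOpen Hopen := isOpen_lt continuous_const continuous_snd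
lemma Hopen_subset_Hplane : Hopen ⊆ Hplane := fun p hp => show (0:ℝ) ≤ p.2 from le_of_lt hp

lemma uniqueDiffOn_Hplane : UniqueDiffOn ℝ Hplane := by
  have : Hplane = (univ : Set (ℝ × ℝ)) ×ˢ Ici (0:ℝ) := by
    ext p; simp [Hplane, Set.mem_prod]
  rw [this]
  exact uniqueDiffOn_univ.prod (uniqueDiffOn_Ici 0)

lemma isOpen_OmegaFull {η : ℝ × ℝ → ℝ} (hη : Continuous η) : IsOpen (OmegaFull η) :=
  (isOpen_lt continuous_const continuous_snd).inter
    (isOpen_lt continuous_snd (hη.comp continuous_fst))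

lemma isOpen_Tfund : IsOpen Tfund := isOpen_Ioo.prod isOpen_Ioo

lemma isOpen_OmegaSet {η : ℝ × ℝ → ℝ} (hη : Continuous η) : IsOpen (OmegaSet η) := by
  have : OmegaSet η = (Tfund ×ˢ (univ : Set ℝ)) ∩ OmegaFull η := by
    ext p
    constructor
    · rintro ⟨h1, h2, h3⟩; exact ⟨⟨h1, trivial⟩, h2, h3⟩
    · rintro ⟨⟨h1, -⟩, h2, h3⟩; exact ⟨h1, h2, h3⟩
  rw [this]
  exact ((isOpen_Tfund.prod isOpen_univ)).inter (isOpen_OmegaFull hη)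

/-- general integrability helper -/
lemma myIntOn {α : Type*} [MeasureSpace α] [TopologicalSpace α] [OpensMeasurableSpace α]
    [TopologicalSpace.PseudoMetrizableSpace α]
    {f : α → ℝ} {s : Set α}
    (hs : MeasurableSet s) (hv : volume s < ⊤) (hf : ContinuousOn f s) {B : ℝ}
    (hB : ∀ p ∈ s, |f p| ≤ B) : IntegrableOn f s := by
  refine ⟨hf.aestronglyMeasurable hs, ?_⟩
  exact HasFiniteIntegral.restrict_of_bounded (C := B) hv
    ((ae_restrict_iff' hs).2 (Filter.Eventually.of_forall fun p hp => by
      simpa [Real.norm_eq_abs] using hB p hp))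

end KornAux

open MeasureTheory Real Set Matrix Filter Topology
namespace KornAux

def boxS (M : ℝ) : Set E3 := Tfund ×ˢ Ioo (0:ℝ) M
def cube (M : ℝ) : Set E3 := (Icc (0:ℝ) 1 ×ˢ Icc (0:ℝ) 1) ×ˢ Icc (0:ℝ) M

lemma isOpen_box (M : ℝ) : IsOpen (boxS M) := (isOpen_Tfund.prod isOpen_Ioo)
lemma isCompact_cube (M : ℝ) : IsCompact (cube M) :=
  ((isCompact_Icc.prod isCompact_Icc).prod isCompact_Icc)
lemma box_subset_cube (M : ℝ) : boxS M ⊆ cube M := by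
  rintro ⟨⟨x, y⟩, z⟩ ⟨⟨hx, hy⟩, hz⟩
  exact ⟨⟨⟨hx.1.le, hx.2.le⟩, ⟨hy.1.le, hy.2.le⟩⟩, ⟨hz.1.le, hz.2.le⟩⟩
lemma box_subset_Hopen (M : ℝ) : boxS M ⊆ Hopen := by
  rintro ⟨⟨x, y⟩, z⟩ ⟨-, hz⟩; exact hz.1
lemma volume_box_lt (M : ℝ) : volume (boxS M) < ⊤ :=
  lt_of_le_of_lt (measure_mono (box_subset_cube M)) (isCompact_cube M).measure_lt_top

lemma pdX_continuousOn {f : E3 → ℝ} (hf : ContDiffOn ℝ 1 f Hopen) :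
    ContinuousOn (pdX f) Hopen := by
  have hc := hf.continuousOn_fderiv_of_isOpen isOpen_Hopen le_rfl
  exact ContinuousOn.congr (hc.clm_apply (continuousOn_const (c := vX)))
    (fun p hp => pdX_eq ((hf.contDiffAt (isOpen_Hopen.mem_nhds hp)).differentiableAt one_ne_zero))

lemma pdY_continuousOn {f : E3 → ℝ} (hf : ContDiffOn ℝ 1 f Hopen) :
    ContinuousOn (pdY f) Hopen := by
  have hc := hf.continuousOn_fderiv_of_isOpen isOpen_Hopen le_rfl
  exact ContinuousOn.congr (hc.clm_apply (continuousOn_const (c := vY)))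
    (fun p hp => pdY_eq ((hf.contDiffAt (isOpen_Hopen.mem_nhds hp)).differentiableAt one_ne_zero))

lemma pdZ_continuousOn {f : E3 → ℝ} (hf : ContDiffOn ℝ 1 f Hopen) :
    ContinuousOn (pdZ f) Hopen := by
  have hc := hf.continuousOn_fderiv_of_isOpen isOpen_Hopen le_rfl
  exact ContinuousOn.congr (hc.clm_apply (continuousOn_const (c := vZ)))
    (fun p hp => pdZ_eq ((hf.contDiffAt (isOpen_Hopen.mem_nhds hp)).differentiableAt one_ne_zero))

lemma bound_on_box {f : E3 → ℝ} {K : Set E3} (hK : IsClosed K) (hKH : K ⊆ Hopen)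
    (h0 : ∀ p ∉ K, f p = 0) (hc : ContinuousOn f Hopen) (M : ℝ) :
    ∃ B, 0 ≤ B ∧ ∀ p ∈ boxS M, |f p| ≤ B := by
  have hcomp : IsCompact (K ∩ cube M) := (isCompact_cube M).inter_left hK
  obtain ⟨C, hC⟩ := hcomp.exists_bound_of_continuousOn
    (hc.mono ((Set.inter_subset_left).trans hKH))
  refine ⟨max C 0, le_max_right _ _, fun p hp => ?_⟩
  by_cases hpK : p ∈ K
  · have := hC p ⟨hpK, box_subset_cube M hp⟩
    rw [Real.norm_eq_abs] at this
    exact this.trans (le_max_left _ _)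
  · simp [h0 p hpK]

lemma norm_vX_le : ‖vX‖ ≤ 1 := by
  rw [vX]; rw [Prod.norm_def, Prod.norm_def]; simp
lemma norm_vY_le : ‖vY‖ ≤ 1 := by
  rw [vY]; rw [Prod.norm_def, Prod.norm_def]; simp
lemma norm_vZ_le : ‖vZ‖ ≤ 1 := by
  rw [vZ]; rw [Prod.norm_def, Prod.norm_def]; simp

lemma bound_pd_on_box {f : E3 → ℝ} (hf : ContDiffOn ℝ 1 f Hplane) (M : ℝ) :
    ∃ B, 0 ≤ B ∧ ∀ p ∈ boxS M,
      |f p| ≤ B ∧ |pdX f p| ≤ B ∧ |pdY f p| ≤ B ∧ |pdZ f p| ≤ B := by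
  have hW : ContinuousOn (fderivWithin ℝ f Hplane) Hplane :=
    hf.continuousOn_fderivWithin uniqueDiffOn_Hplane le_rfl
  have hsub : cube M ⊆ Hplane := by
    rintro ⟨⟨x, y⟩, z⟩ ⟨-, hz⟩; exact hz.1
  obtain ⟨B1, hB1⟩ := (isCompact_cube M).exists_bound_of_continuousOn (hW.mono hsub)
  obtain ⟨B2, hB2⟩ := (isCompact_cube M).exists_bound_of_continuousOn
    (hf.continuousOn.mono hsub)
  refine ⟨max (max B1 B2) 0, le_max_right _ _, ?_⟩
  intro p hp
  have hpH : Hplane ∈ 𝓝 p :=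
    Filter.mem_of_superset (isOpen_Hopen.mem_nhds (box_subset_Hopen M hp)) Hopen_subset_Hplane
  have hdiff : DifferentiableAt ℝ f p :=
    ((hf.contDiffAt hpH).differentiableAt one_ne_zero)
  have hWe : fderivWithin ℝ f Hplane p = fderiv ℝ f p := fderivWithin_of_mem_nhds hpH
  have hpc : p ∈ cube M := box_subset_cube M hp
  have hWb : ‖fderiv ℝ f p‖ ≤ B1 := by rw [← hWe]; exact hB1 p hpc
  have hB1' : 0 ≤ B1 := le_trans (norm_nonneg _) (hB1 p hpc)
  have key : ∀ v : E3, ‖v‖ ≤ 1 → |fderiv ℝ f p v| ≤ max (max B1 B2) 0 := by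
    intro v hv
    rw [← Real.norm_eq_abs]
    calc ‖fderiv ℝ f p v‖ ≤ ‖fderiv ℝ f p‖ * ‖v‖ := (fderiv ℝ f p).le_opNorm v
    _ ≤ B1 * 1 := mul_le_mul hWb hv (norm_nonneg _) hB1'
    _ ≤ max (max B1 B2) 0 := by rw [mul_one]; exact le_max_of_le_left (le_max_left _ _)
  refine ⟨?_, ?_, ?_, ?_⟩
  · rw [← Real.norm_eq_abs]
    exact le_trans (hB2 p hpc) (le_max_of_le_left (le_max_right _ _))
  · rw [pdX_eq hdiff]; exact key vX norm_vX_le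
  · rw [pdY_eq hdiff]; exact key vY norm_vY_le
  · rw [pdZ_eq hdiff]; exact key vZ norm_vZ_le

end KornAux

open MeasureTheory Real Set Matrix Filter Topology
namespace KornAux

lemma pdZ_shift_x {f : E3 → ℝ} (hper : ∀ x y z : ℝ, f ((x+1,y),z) = f ((x,y),z))
    (x y z : ℝ) : pdZ f ((x+1,y),z) = pdZ f ((x,y),z) := by
  show deriv (fun t => f ((x+1, y), t)) z = deriv (fun t => f ((x, y), t)) z
  congr 1
  funext t
  exact hper x y t

lemma pdY_shift_x {f : E3 → ℝ} (hper : ∀ x y z : ℝ, f ((x+1,y),z) = f ((x,y),z))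
    (x y z : ℝ) : pdY f ((x+1,y),z) = pdY f ((x,y),z) := by
  show deriv (fun t => f ((x+1, t), z)) y = deriv (fun t => f ((x, t), z)) y
  congr 1
  funext t
  exact hper x t z

lemma pdZ_shift_y {f : E3 → ℝ} (hper : ∀ x y z : ℝ, f ((x,y+1),z) = f ((x,y),z))
    (x y z : ℝ) : pdZ f ((x,y+1),z) = pdZ f ((x,y),z) := by
  show deriv (fun t => f ((x, y+1), t)) z = deriv (fun t => f ((x, y), t)) z
  congr 1
  funext t
  exact hper x y t

lemma pdX_shift_y {f : E3 → ℝ} (hper : ∀ x y z : ℝ, f ((x,y+1),z) = f ((x,y),z))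
    (x y z : ℝ) : pdX f ((x,y+1),z) = pdX f ((x,y),z) := by
  show deriv (fun t => f ((t, y+1), z)) x = deriv (fun t => f ((t, y), z)) x
  congr 1
  funext t
  exact hper t y z

lemma eta_le_sSup {η : ℝ × ℝ → ℝ} (hc : Continuous η) (hper : PeriodicTorus η) :
    ∀ q, η q ≤ sSup (Set.range η) := by
  have himg : IsCompact (η '' (Icc (0:ℝ) 1 ×ˢ Icc (0:ℝ) 1)) :=
    (isCompact_Icc.prod isCompact_Icc).image hc
  have hsub : Set.range η ⊆ η '' (Icc (0:ℝ) 1 ×ˢ Icc (0:ℝ) 1) := by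
    rintro - ⟨⟨x, y⟩, rfl⟩
    have hpx : Function.Periodic (fun t => η (t, y)) 1 := fun t => hper.1 t y
    obtain ⟨x', hx', hxe⟩ := hpx.exists_mem_Ico₀ one_pos x
    have hpy : Function.Periodic (fun t => η (x', t)) 1 := fun t => hper.2 x' t
    obtain ⟨y', hy', hye⟩ := hpy.exists_mem_Ico₀ one_pos y
    refine ⟨(x', y'), ⟨⟨hx'.1, hx'.2.le⟩, ⟨hy'.1, hy'.2.le⟩⟩, ?_⟩
    exact (hxe.trans hye).symm
  have hbdd : BddAbove (Set.range η) := himg.bddAbove.mono hsub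
  exact fun q => le_csSup hbdd ⟨q, rfl⟩

lemma eventually_zero_sliceZ {Φ : E3 → ℝ} {p : E3} (h : ∀ᶠ q in 𝓝 p, Φ q = 0) :
    (fun t => Φ (p.1, t)) =ᶠ[𝓝 p.2] fun _ => (0:ℝ) := by
  have hc : ContinuousAt (fun t : ℝ => ((p.1, t) : E3)) p.2 :=
    (hasDerivAt_curveZ p).continuousAt
  have := hc.tendsto
  rw [show ((p.1, p.2) : E3) = p from rfl] at this
  exact Filter.Eventually.mono (this.eventually h) (fun t ht => ht)

end KornAux

open MeasureTheory Real Set Matrix Filter Topology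
namespace KornAux

lemma integrableOn_pd_box {g : E3 → ℝ} {K : Set E3} {M : ℝ} (hK : IsClosed K)
    (hKH : K ⊆ Hopen) (hg0 : ∀ p ∉ K, g p = 0) (hgc : ContinuousOn g Hopen) :
    IntegrableOn g (boxS M) := by
  obtain ⟨B, -, hB⟩ := bound_on_box hK hKH hg0 hgc M
  exact myIntOn (isOpen_box M).measurableSet (volume_box_lt M)
    (hgc.mono (box_subset_Hopen M)) hB

lemma ibp_Z {Φ : E3 → ℝ} {K : Set E3} {M : ℝ} (hM : 0 < M) (hK : IsClosed K)
    (hKH : K ⊆ Hopen) (hKM : ∀ p ∈ K, p.2 < M) (hΦ0 : ∀ p ∉ K, Φ p = 0)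
    (hΦ : ContDiffOn ℝ 1 Φ Hopen) :
    ∫ p in boxS M, pdZ Φ p = 0 := by
  have hcont : ContinuousOn (pdZ Φ) Hopen := pdZ_continuousOn hΦ
  have h0' : ∀ p ∉ K, pdZ Φ p = 0 := fun p hp =>
    (pd_zero_of_zero_off_closed hK hΦ0 hp).2.2.2
  have hint : IntegrableOn (pdZ Φ) (boxS M) := integrableOn_pd_box hK hKH h0' hcont
  have hbm : MeasurableSet (boxS M) := (isOpen_box M).measurableSet
  have hglob : Integrable ((boxS M).indicator (pdZ Φ)) volume :=
    (integrable_indicator_iff hbm).2 hint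
  rw [← integral_indicator hbm]
  rw [MeasureTheory.Measure.volume_eq_prod] at hglob ⊢
  rw [integral_prod _ hglob]
  have hinner : ∀ q : ℝ × ℝ, (∫ z, (boxS M).indicator (pdZ Φ) (q, z)) = 0 := by
    intro q
    by_cases hq : q ∈ Tfund
    · have hrw : ∀ z : ℝ, (boxS M).indicator (pdZ Φ) (q, z)
          = (Ioo (0:ℝ) M).indicator (fun z => pdZ Φ (q, z)) z := by
        intro z
        by_cases hz : z ∈ Ioo (0:ℝ) M
        · rw [Set.indicator_of_mem (show ((q,z):E3) ∈ boxS M from ⟨hq, hz⟩),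
            Set.indicator_of_mem hz]
        · rw [Set.indicator_of_notMem (fun h => hz h.2), Set.indicator_of_notMem hz]
      rw [integral_congr_ae (Filter.Eventually.of_forall hrw),
        integral_indicator measurableSet_Ioo]
      -- now prove ∫ z in Ioo 0 M, pdZ Φ (q, z) = 0 via FTC
      have hK0 : ((q, (0:ℝ)) : E3) ∉ K := fun h => lt_irrefl (0:ℝ) (hKH h)
      have hKM' : ((q, M) : E3) ∉ K := fun h => lt_irrefl M (hKM _ h)
      have hev0 : ∀ᶠ p' in 𝓝 ((q, (0:ℝ)) : E3), Φ p' = 0 := by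
        filter_upwards [hK.isOpen_compl.mem_nhds hK0] with p' hp' using hΦ0 p' hp'
      have hderiv : ∀ t ∈ Set.uIcc (0:ℝ) M,
          HasDerivAt (fun t => Φ (q, t)) (pdZ Φ (q, t)) t := by
        intro t ht
        rw [Set.uIcc_of_le hM.le] at ht
        rcases eq_or_lt_of_le ht.1 with h0 | h0
        · subst h0
          have hsl := eventually_zero_sliceZ (p := ((q, (0:ℝ)) : E3)) hev0
          have hpd0 : pdZ Φ ((q, (0:ℝ)) : E3) = 0 := pdZ_eventually_zero hev0
          rw [hpd0]
          exact (hasDerivAt_const (0:ℝ) (0:ℝ)).congr_of_eventuallyEq hsl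
        · have hdiff : DifferentiableAt ℝ Φ ((q, t) : E3) :=
            (hΦ.contDiffAt (isOpen_Hopen.mem_nhds h0)).differentiableAt one_ne_zero
          exact hasDerivAt_sliceZ' hdiff
      have hii : IntervalIntegrable (fun t => pdZ Φ (q, t)) volume 0 M := by
        apply ContinuousOn.intervalIntegrable
        rw [Set.uIcc_of_le hM.le]
        intro t ht
        rcases eq_or_lt_of_le ht.1 with h0 | h0
        · subst h0
          have hev : ∀ᶠ τ in 𝓝 (0:ℝ), pdZ Φ (q, τ) = 0 := by
            have hcur : ContinuousAt (fun τ : ℝ => ((q, τ) : E3)) 0 :=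
              (continuous_const.prodMk continuous_id).continuousAt
            have hmem : Kᶜ ∈ 𝓝 ((q, (0:ℝ)) : E3) := hK.isOpen_compl.mem_nhds hK0
            filter_upwards [hcur.tendsto.eventually_mem hmem] with τ hτ using h0' _ hτ
          have : ContinuousAt (fun τ => pdZ Φ (q, τ)) 0 :=
            (continuousAt_congr hev).2 continuousAt_const
          exact this.continuousWithinAt
        · have : ContinuousAt (fun τ => pdZ Φ (q, τ)) t := by
            have hcur : ContinuousAt (fun τ : ℝ => ((q, τ) : E3)) t :=
              (continuous_const.prodMk continuous_id).continuousAt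
            exact (hcont.continuousAt (isOpen_Hopen.mem_nhds h0)).comp hcur
          exact this.continuousWithinAt
      have hftc := intervalIntegral.integral_eq_sub_of_hasDerivAt hderiv hii
      rw [← MeasureTheory.integral_Ioc_eq_integral_Ioo,
        ← intervalIntegral.integral_of_le hM.le, hftc, hΦ0 _ hKM', hΦ0 _ hK0, sub_zero]
    · have hrw : ∀ z : ℝ, (boxS M).indicator (pdZ Φ) (q, z) = 0 := by
        intro z
        exact Set.indicator_of_notMem (fun h => hq h.1) _
      rw [integral_congr_ae (Filter.Eventually.of_forall hrw), integral_zero]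
  calc (∫ q : ℝ × ℝ, ∫ z, (boxS M).indicator (pdZ Φ) (q, z))
      = ∫ q : ℝ × ℝ, (0:ℝ) := integral_congr_ae (Filter.Eventually.of_forall hinner)
    _ = 0 := integral_zero _ _

end KornAux

open MeasureTheory Real Set Matrix Filter Topology
namespace KornAux

lemma volume_Tfund_lt : volume Tfund < ⊤ :=
  lt_of_le_of_lt (measure_mono (Set.prod_mono Set.Ioo_subset_Icc_self Set.Ioo_subset_Icc_self))
    (isCompact_Icc.prod isCompact_Icc).measure_lt_top

lemma measurableSet_Tfund : MeasurableSet Tfund := isOpen_Tfund.measurableSet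

lemma ibp_X {Φ : E3 → ℝ} {K : Set E3} {M : ℝ} (hM : 0 < M) (hK : IsClosed K)
    (hKH : K ⊆ Hopen) (hΦ0 : ∀ p ∉ K, Φ p = 0)
    (hΦ : ContDiffOn ℝ 1 Φ Hopen)
    (hper : ∀ x y z : ℝ, Φ ((x + 1, y), z) = Φ ((x, y), z)) :
    ∫ p in boxS M, pdX Φ p = 0 := by
  have hcont : ContinuousOn (pdX Φ) Hopen := pdX_continuousOn hΦ
  have h0' : ∀ p ∉ K, pdX Φ p = 0 := fun p hp =>
    (pd_zero_of_zero_off_closed hK hΦ0 hp).2.1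
  obtain ⟨B, hB0, hB⟩ := bound_on_box hK hKH h0' hcont M
  have hint : IntegrableOn (pdX Φ) (boxS M) :=
    myIntOn (isOpen_box M).measurableSet (volume_box_lt M)
      (hcont.mono (box_subset_Hopen M)) hB
  have hbm : MeasurableSet (boxS M) := (isOpen_box M).measurableSet
  have hglob : Integrable ((boxS M).indicator (pdX Φ)) volume :=
    (integrable_indicator_iff hbm).2 hint
  rw [← integral_indicator hbm]
  rw [MeasureTheory.Measure.volume_eq_prod] at hglob ⊢
  rw [integral_prod_symm _ hglob]
  have hinner : ∀ z : ℝ, (∫ q : ℝ × ℝ, (boxS M).indicator (pdX Φ) (q, z)) = 0 := by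
    intro z
    by_cases hz : z ∈ Ioo (0:ℝ) M
    · -- rewrite as Tfund.indicator
      have hrw : ∀ q : ℝ × ℝ, (boxS M).indicator (pdX Φ) (q, z)
          = Tfund.indicator (fun q => pdX Φ (q, z)) q := by
        intro q
        by_cases hq : q ∈ Tfund
        · rw [Set.indicator_of_mem (show ((q,z):E3) ∈ boxS M from ⟨hq, hz⟩),
            Set.indicator_of_mem hq]
        · rw [Set.indicator_of_notMem (fun h => hq h.1), Set.indicator_of_notMem hq]
      rw [integral_congr_ae (Filter.Eventually.of_forall hrw)]
      -- integrability of the 2d function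
      have hcont2 : ContinuousOn (fun q : ℝ × ℝ => pdX Φ (q, z)) Tfund := by
        apply ContinuousOn.comp (t := Hopen) hcont
        · exact (continuous_id.prodMk continuous_const).continuousOn
        · intro q hq
          exact box_subset_Hopen M (show ((q,z):E3) ∈ boxS M from ⟨hq, hz⟩)
      have hint2 : IntegrableOn (fun q : ℝ × ℝ => pdX Φ (q, z)) Tfund := by
        refine myIntOn measurableSet_Tfund volume_Tfund_lt hcont2 (B := B) ?_
        intro q hq
        exact hB _ ⟨hq, hz⟩
      have hglob2 : Integrable (Tfund.indicator (fun q : ℝ × ℝ => pdX Φ (q, z))) volume :=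
        (integrable_indicator_iff measurableSet_Tfund).2 hint2
      rw [MeasureTheory.Measure.volume_eq_prod] at hglob2 ⊢
      rw [integral_prod_symm _ hglob2]
      have hinner2 : ∀ y : ℝ,
          (∫ x : ℝ, Tfund.indicator (fun q : ℝ × ℝ => pdX Φ (q, z)) (x, y)) = 0 := by
        intro y
        by_cases hy : y ∈ Ioo (0:ℝ) 1
        · have hrw2 : ∀ x : ℝ, Tfund.indicator (fun q : ℝ × ℝ => pdX Φ (q, z)) (x, y)
              = (Ioo (0:ℝ) 1).indicator (fun x => pdX Φ ((x, y), z)) x := by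
            intro x
            by_cases hx : x ∈ Ioo (0:ℝ) 1
            · rw [Set.indicator_of_mem (show ((x,y) : ℝ × ℝ) ∈ Tfund from ⟨hx, hy⟩),
                Set.indicator_of_mem hx]
            · rw [Set.indicator_of_notMem (fun h => hx h.1), Set.indicator_of_notMem hx]
          rw [integral_congr_ae (Filter.Eventually.of_forall hrw2),
            integral_indicator measurableSet_Ioo]
          have hderiv : ∀ t ∈ Set.uIcc (0:ℝ) 1,
              HasDerivAt (fun t => Φ ((t, y), z)) (pdX Φ ((t, y), z)) t := by
            intro t ht
            have hdiff : DifferentiableAt ℝ Φ (((t, y), z) : E3) :=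
              (hΦ.contDiffAt (isOpen_Hopen.mem_nhds hz.1)).differentiableAt one_ne_zero
            exact hasDerivAt_sliceX' hdiff
          have hii : IntervalIntegrable (fun t => pdX Φ ((t, y), z)) volume 0 1 := by
            apply ContinuousOn.intervalIntegrable
            intro t ht
            have hcur : ContinuousAt (fun t : ℝ => (((t, y), z) : E3)) t :=
              ((continuous_id.prodMk continuous_const).prodMk continuous_const).continuousAt
            exact ((hcont.continuousAt (isOpen_Hopen.mem_nhds hz.1)).comp hcur).continuousWithinAt
          have hftc := intervalIntegral.integral_eq_sub_of_hasDerivAt hderiv hii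
          rw [← MeasureTheory.integral_Ioc_eq_integral_Ioo,
            ← intervalIntegral.integral_of_le zero_le_one, hftc]
          have := hper 0 y z
          rw [zero_add] at this
          rw [this, sub_self]
        · have hrw2 : ∀ x : ℝ, Tfund.indicator (fun q : ℝ × ℝ => pdX Φ (q, z)) (x, y) = 0 :=
            fun x => Set.indicator_of_notMem (fun h => hy h.2) _
          rw [integral_congr_ae (Filter.Eventually.of_forall hrw2), integral_zero]
      calc (∫ y : ℝ, ∫ x : ℝ, Tfund.indicator (fun q : ℝ × ℝ => pdX Φ (q, z)) (x, y))
          = ∫ y : ℝ, (0:ℝ) := integral_congr_ae (Filter.Eventually.of_forall hinner2)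
        _ = 0 := integral_zero _ _
    · have hrw : ∀ q : ℝ × ℝ, (boxS M).indicator (pdX Φ) (q, z) = 0 :=
        fun q => Set.indicator_of_notMem (fun h => hz h.2) _
      rw [integral_congr_ae (Filter.Eventually.of_forall hrw), integral_zero]
  calc (∫ z : ℝ, ∫ q : ℝ × ℝ, (boxS M).indicator (pdX Φ) (q, z))
      = ∫ z : ℝ, (0:ℝ) := integral_congr_ae (Filter.Eventually.of_forall hinner)
    _ = 0 := integral_zero _ _

end KornAux

open MeasureTheory Real Set Matrix Filter Topology
namespace KornAux

lemma ibp_Y {Φ : E3 → ℝ} {K : Set E3} {M : ℝ} (hM : 0 < M) (hK : IsClosed K)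
    (hKH : K ⊆ Hopen) (hΦ0 : ∀ p ∉ K, Φ p = 0)
    (hΦ : ContDiffOn ℝ 1 Φ Hopen)
    (hper : ∀ x y z : ℝ, Φ ((x, y + 1), z) = Φ ((x, y), z)) :
    ∫ p in boxS M, pdY Φ p = 0 := by
  have hcont : ContinuousOn (pdY Φ) Hopen := pdY_continuousOn hΦ
  have h0' : ∀ p ∉ K, pdY Φ p = 0 := fun p hp =>
    (pd_zero_of_zero_off_closed hK hΦ0 hp).2.2.1
  obtain ⟨B, hB0, hB⟩ := bound_on_box hK hKH h0' hcont M
  have hint : IntegrableOn (pdY Φ) (boxS M) :=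
    myIntOn (isOpen_box M).measurableSet (volume_box_lt M)
      (hcont.mono (box_subset_Hopen M)) hB
  have hbm : MeasurableSet (boxS M) := (isOpen_box M).measurableSet
  have hglob : Integrable ((boxS M).indicator (pdY Φ)) volume :=
    (integrable_indicator_iff hbm).2 hint
  rw [← integral_indicator hbm]
  rw [MeasureTheory.Measure.volume_eq_prod] at hglob ⊢
  rw [integral_prod_symm _ hglob]
  have hinner : ∀ z : ℝ, (∫ q : ℝ × ℝ, (boxS M).indicator (pdY Φ) (q, z)) = 0 := by
    intro z
    by_cases hz : z ∈ Ioo (0:ℝ) M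
    · -- rewrite as Tfund.indicator
      have hrw : ∀ q : ℝ × ℝ, (boxS M).indicator (pdY Φ) (q, z)
          = Tfund.indicator (fun q => pdY Φ (q, z)) q := by
        intro q
        by_cases hq : q ∈ Tfund
        · rw [Set.indicator_of_mem (show ((q,z):E3) ∈ boxS M from ⟨hq, hz⟩),
            Set.indicator_of_mem hq]
        · rw [Set.indicator_of_notMem (fun h => hq h.1), Set.indicator_of_notMem hq]
      rw [integral_congr_ae (Filter.Eventually.of_forall hrw)]
      -- integrability of the 2d function
      have hcont2 : ContinuousOn (fun q : ℝ × ℝ => pdY Φ (q, z)) Tfund := by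
        apply ContinuousOn.comp (t := Hopen) hcont
        · exact (continuous_id.prodMk continuous_const).continuousOn
        · intro q hq
          exact box_subset_Hopen M (show ((q,z):E3) ∈ boxS M from ⟨hq, hz⟩)
      have hint2 : IntegrableOn (fun q : ℝ × ℝ => pdY Φ (q, z)) Tfund := by
        refine myIntOn measurableSet_Tfund volume_Tfund_lt hcont2 (B := B) ?_
        intro q hq
        exact hB _ ⟨hq, hz⟩
      have hglob2 : Integrable (Tfund.indicator (fun q : ℝ × ℝ => pdY Φ (q, z))) volume :=
        (integrable_indicator_iff measurableSet_Tfund).2 hint2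
      rw [MeasureTheory.Measure.volume_eq_prod] at hglob2 ⊢
      rw [integral_prod _ hglob2]
      have hinner2 : ∀ x : ℝ,
          (∫ y : ℝ, Tfund.indicator (fun q : ℝ × ℝ => pdY Φ (q, z)) (x, y)) = 0 := by
        intro x
        by_cases hx : x ∈ Ioo (0:ℝ) 1
        · have hrw2 : ∀ y : ℝ, Tfund.indicator (fun q : ℝ × ℝ => pdY Φ (q, z)) (x, y)
              = (Ioo (0:ℝ) 1).indicator (fun y => pdY Φ ((x, y), z)) y := by
            intro y
            by_cases hy : y ∈ Ioo (0:ℝ) 1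
            · rw [Set.indicator_of_mem (show ((x,y) : ℝ × ℝ) ∈ Tfund from ⟨hx, hy⟩),
                Set.indicator_of_mem hy]
            · rw [Set.indicator_of_notMem (fun h => hy h.2), Set.indicator_of_notMem hy]
          rw [integral_congr_ae (Filter.Eventually.of_forall hrw2),
            integral_indicator measurableSet_Ioo]
          have hderiv : ∀ t ∈ Set.uIcc (0:ℝ) 1,
              HasDerivAt (fun t => Φ ((x, t), z)) (pdY Φ ((x, t), z)) t := by
            intro t ht
            have hdiff : DifferentiableAt ℝ Φ (((x, t), z) : E3) :=
              (hΦ.contDiffAt (isOpen_Hopen.mem_nhds hz.1)).differentiableAt one_ne_zero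
            exact hasDerivAt_sliceY' hdiff
          have hii : IntervalIntegrable (fun t => pdY Φ ((x, t), z)) volume 0 1 := by
            apply ContinuousOn.intervalIntegrable
            intro t ht
            have hcur : ContinuousAt (fun t : ℝ => (((x, t), z) : E3)) t :=
              ((continuous_const.prodMk continuous_id).prodMk continuous_const).continuousAt
            exact ((hcont.continuousAt (isOpen_Hopen.mem_nhds hz.1)).comp hcur).continuousWithinAt
          have hftc := intervalIntegral.integral_eq_sub_of_hasDerivAt hderiv hii
          rw [← MeasureTheory.integral_Ioc_eq_integral_Ioo,
            ← intervalIntegral.integral_of_le zero_le_one, hftc]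
          have := hper x 0 z
          rw [zero_add] at this
          rw [this, sub_self]
        · have hrw2 : ∀ y : ℝ, Tfund.indicator (fun q : ℝ × ℝ => pdY Φ (q, z)) (x, y) = 0 :=
            fun y => Set.indicator_of_notMem (fun h => hx h.1) _
          rw [integral_congr_ae (Filter.Eventually.of_forall hrw2), integral_zero]
      calc (∫ x : ℝ, ∫ y : ℝ, Tfund.indicator (fun q : ℝ × ℝ => pdY Φ (q, z)) (x, y))
          = ∫ x : ℝ, (0:ℝ) := integral_congr_ae (Filter.Eventually.of_forall hinner2)
        _ = 0 := integral_zero _ _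
    · have hrw : ∀ q : ℝ × ℝ, (boxS M).indicator (pdY Φ) (q, z) = 0 :=
        fun q => Set.indicator_of_notMem (fun h => hz h.2) _
      rw [integral_congr_ae (Filter.Eventually.of_forall hrw), integral_zero]
  calc (∫ z : ℝ, ∫ q : ℝ × ℝ, (boxS M).indicator (pdY Φ) (q, z))
      = ∫ z : ℝ, (0:ℝ) := integral_congr_ae (Filter.Eventually.of_forall hinner)
    _ = 0 := integral_zero _ _

end KornAux

open MeasureTheory Real Set Matrix Filter Topology
namespace KornAux

lemma cs_1d {f : ℝ → ℝ} {z : ℝ} (hz : 0 < z)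
    (h1 : IntervalIntegrable f volume 0 z)
    (h2 : IntervalIntegrable (fun t => f t ^ 2) volume 0 z) :
    (∫ t in (0:ℝ)..z, f t) ^ 2 ≤ z * ∫ t in (0:ℝ)..z, f t ^ 2 := by
  set I := ∫ t in (0:ℝ)..z, f t with hI
  set a := I / z with ha
  have key : 0 ≤ ∫ t in (0:ℝ)..z, (f t - a) ^ 2 :=
    intervalIntegral.integral_nonneg hz.le (fun t _ => sq_nonneg _)
  have hexp : ∫ t in (0:ℝ)..z, (f t - a) ^ 2
      = (∫ t in (0:ℝ)..z, f t ^ 2) - 2 * a * I + a ^ 2 * z := by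
    have : (fun t => (f t - a) ^ 2) = fun t => f t ^ 2 - (2 * a) * f t + a ^ 2 := by
      funext t; ring
    rw [this]
    rw [intervalIntegral.integral_add ((h2.sub (h1.const_mul (2 * a)))) intervalIntegrable_const]
    rw [intervalIntegral.integral_sub h2 (h1.const_mul (2 * a))]
    rw [intervalIntegral.integral_const_mul, intervalIntegral.integral_const]
    simp only [← hI, smul_eq_mul, sub_zero]
    ring
  rw [hexp] at key
  have haz : a * z = I := by rw [ha, div_mul_cancel₀ _ hz.ne']
  nlinarith [sq_nonneg I, key]

lemma poincare_1d {φ dφ : ℝ → ℝ} {h s : ℝ} (h0 : 0 < h) (hhs : h ≤ s)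
    (hφ0 : φ 0 = 0)
    (hφc : ContinuousOn φ (Icc 0 h))
    (hd : ∀ t ∈ Ioo (0:ℝ) h, HasDerivAt φ (dφ t) t)
    (hdi : IntegrableOn dφ (Ioc 0 h))
    (hdi2 : IntegrableOn (fun t => dφ t ^ 2) (Ioc 0 h))
    (hφ2i : IntegrableOn (fun t => φ t ^ 2) (Ioo 0 h)) :
    ∫ t in Ioo 0 h, φ t ^ 2 ≤ s ^ 2 * ∫ t in Ioo 0 h, dφ t ^ 2 := by
  have hs0 : 0 ≤ s := le_trans h0.le hhs
  set A := ∫ t in (0:ℝ)..h, dφ t ^ 2 with hA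
  have hA0 : 0 ≤ A := intervalIntegral.integral_nonneg h0.le (fun t _ => sq_nonneg _)
  have hptw : ∀ z ∈ Ioo (0:ℝ) h, φ z ^ 2 ≤ s * A := by
    intro z hz
    have hzh : z ≤ h := hz.2.le
    have hii1 : IntervalIntegrable dφ volume 0 z := by
      rw [intervalIntegrable_iff_integrableOn_Ioc_of_le hz.1.le]
      exact hdi.mono_set (Ioc_subset_Ioc le_rfl hzh)
    have hii2 : IntervalIntegrable (fun t => dφ t ^ 2) volume 0 z := by
      rw [intervalIntegrable_iff_integrableOn_Ioc_of_le hz.1.le]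
      exact hdi2.mono_set (Ioc_subset_Ioc le_rfl hzh)
    have hftc : ∫ t in (0:ℝ)..z, dφ t = φ z - φ 0 := by
      apply intervalIntegral.integral_eq_sub_of_hasDerivAt_of_le hz.1.le
        (hφc.mono (Icc_subset_Icc le_rfl hzh))
        (fun t ht => hd t ⟨ht.1, lt_of_lt_of_le ht.2 hzh⟩) hii1
    rw [hφ0, sub_zero] at hftc
    have hcs := cs_1d hz.1 hii1 hii2
    rw [hftc] at hcs
    have hmono : ∫ t in (0:ℝ)..z, dφ t ^ 2 ≤ A := by
      rw [hA, intervalIntegral.integral_of_le hz.1.le, intervalIntegral.integral_of_le h0.le]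
      apply setIntegral_mono_set hdi2
      · exact (ae_restrict_iff' measurableSet_Ioc).2
          (Filter.Eventually.of_forall (fun t _ => sq_nonneg _))
      · exact HasSubset.Subset.eventuallyLE (Ioc_subset_Ioc le_rfl hzh)
    have hz2 : (0:ℝ) ≤ ∫ t in (0:ℝ)..z, dφ t ^ 2 :=
      intervalIntegral.integral_nonneg hz.1.le (fun t _ => sq_nonneg _)
    calc φ z ^ 2 ≤ z * ∫ t in (0:ℝ)..z, dφ t ^ 2 := hcs
      _ ≤ s * A := mul_le_mul (le_trans hzh hhs) hmono hz2 hs0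
  have hconst : ∫ t in Ioo (0:ℝ) h, φ t ^ 2 ≤ ∫ _t in Ioo (0:ℝ) h, s * A := by
    apply setIntegral_mono_on hφ2i ((integrableOn_const_iff).2 (Or.inr (by
      rw [Real.volume_Ioo]; exact ENNReal.ofReal_lt_top))) measurableSet_Ioo
    exact hptw
  have hcv : ∫ _t in Ioo (0:ℝ) h, s * A = h * (s * A) := by
    rw [setIntegral_const, measureReal_def, Real.volume_Ioo, smul_eq_mul, sub_zero,
      ENNReal.toReal_ofReal h0.le]
  have hfin : ∫ t in Ioo (0:ℝ) h, dφ t ^ 2 = A := by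
    rw [hA, intervalIntegral.integral_of_le h0.le, MeasureTheory.integral_Ioc_eq_integral_Ioo]
  rw [hfin]
  calc ∫ t in Ioo (0:ℝ) h, φ t ^ 2 ≤ h * (s * A) := le_of_le_of_eq hconst hcv
    _ ≤ s * (s * A) := mul_le_mul_of_nonneg_right hhs (mul_nonneg hs0 hA0)
    _ = s ^ 2 * A := by ring

end KornAux

open MeasureTheory Real Set Matrix Filter Topology
namespace KornAux

lemma omega_subset_box {η : ℝ × ℝ → ℝ} {s M : ℝ} (hηs : ∀ q, η q ≤ s) (hsM : s < M) :
    OmegaSet η ⊆ boxS M := by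
  rintro ⟨q, z⟩ ⟨hq, hz0, hzη⟩
  exact ⟨hq, hz0, lt_of_lt_of_le hzη ((hηs q).trans hsM.le)⟩

lemma omega_subset_Hopen (η : ℝ × ℝ → ℝ) : OmegaSet η ⊆ Hopen := fun p hp => hp.2.1

lemma poincare_comp {η : ℝ × ℝ → ℝ} {g : E3 → ℝ} {s M B : ℝ}
    (hηc : Continuous η) (hηpos : ∀ q, 0 < η q) (hηs : ∀ q, η q ≤ s) (hsM : s < M)
    (hg : ContDiffOn ℝ 1 g Hplane) (hg0 : ∀ q : ℝ × ℝ, g (q, 0) = 0)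
    (hB0 : 0 ≤ B)
    (hB : ∀ p ∈ boxS M, |g p| ≤ B ∧ |pdZ g p| ≤ B) :
    ∫ p in OmegaSet η, g p ^ 2 ≤ s ^ 2 * ∫ p in OmegaSet η, pdZ g p ^ 2 := by
  have hs0 : 0 ≤ s := le_trans (hηpos (0,0)).le (hηs (0,0))
  have hΩbox : OmegaSet η ⊆ boxS M := omega_subset_box hηs hsM
  have hΩm : MeasurableSet (OmegaSet η) := (isOpen_OmegaSet hηc).measurableSet
  have hΩvol : volume (OmegaSet η) < ⊤ :=
    lt_of_le_of_lt (measure_mono hΩbox) (volume_box_lt M)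
  have hgH : ContinuousOn g Hopen := hg.continuousOn.mono Hopen_subset_Hplane
  have hpdH : ContinuousOn (pdZ g) Hopen := pdZ_continuousOn (hg.mono Hopen_subset_Hplane)
  have hint1 : IntegrableOn (fun p => g p ^ 2) (OmegaSet η) := by
    refine myIntOn hΩm hΩvol ((hgH.mono (omega_subset_Hopen η)).pow 2) (B := B ^ 2) ?_
    intro p hp
    rw [abs_pow]
    exact pow_le_pow_left₀ (abs_nonneg _) (hB p (hΩbox hp)).1 2
  have hint2 : IntegrableOn (fun p => s ^ 2 * pdZ g p ^ 2) (OmegaSet η) := by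
    refine myIntOn hΩm hΩvol
      (((hpdH.mono (omega_subset_Hopen η)).pow 2).const_smul (s ^ 2)) (B := s ^ 2 * B ^ 2) ?_
    intro p hp
    have h1 := (hB p (hΩbox hp)).2
    have h2 := abs_nonneg (pdZ g p)
    have h3 := sq_abs (pdZ g p)
    have h4 := sq_nonneg (pdZ g p)
    rw [abs_of_nonneg (by positivity : (0:ℝ) ≤ s ^ 2 * pdZ g p ^ 2)]
    have h5 : pdZ g p ^ 2 ≤ B ^ 2 := by nlinarith
    nlinarith [sq_nonneg s]
  -- indicator functions
  set F1 := (OmegaSet η).indicator (fun p => g p ^ 2) with hF1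
  set F2 := (OmegaSet η).indicator (fun p => s ^ 2 * pdZ g p ^ 2) with hF2
  have hglob1 : Integrable F1 volume := (integrable_indicator_iff hΩm).2 hint1
  have hglob2 : Integrable F2 volume := (integrable_indicator_iff hΩm).2 hint2
  have step1 : ∫ p in OmegaSet η, g p ^ 2 = ∫ p, F1 p := (integral_indicator hΩm).symm
  have step2 : ∫ p, F2 p = s ^ 2 * ∫ p in OmegaSet η, pdZ g p ^ 2 := by
    rw [integral_indicator hΩm, integral_const_mul]
  rw [step1, ← step2]
  rw [MeasureTheory.Measure.volume_eq_prod] at hglob1 hglob2 ⊢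
  rw [integral_prod _ hglob1, integral_prod _ hglob2]
  apply integral_mono hglob1.integral_prod_left hglob2.integral_prod_left
  intro q
  dsimp only
  by_cases hq : q ∈ Tfund
  · have hmem : ∀ z : ℝ, (((q, z) : E3) ∈ OmegaSet η) ↔ z ∈ Ioo 0 (η q) := by
      intro z
      constructor
      · rintro ⟨-, h1, h2⟩; exact ⟨h1, h2⟩
      · rintro ⟨h1, h2⟩; exact ⟨hq, h1, h2⟩
    have hrw1 : ∀ z : ℝ, F1 (q, z) = (Ioo 0 (η q)).indicator (fun z => g (q, z) ^ 2) z := by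
      intro z
      by_cases hz : z ∈ Ioo 0 (η q)
      · rw [hF1, Set.indicator_of_mem ((hmem z).2 hz), Set.indicator_of_mem hz]
      · rw [hF1, Set.indicator_of_notMem (fun h => hz ((hmem z).1 h)),
          Set.indicator_of_notMem hz]
    have hrw2 : ∀ z : ℝ, F2 (q, z)
        = (Ioo 0 (η q)).indicator (fun z => s ^ 2 * pdZ g (q, z) ^ 2) z := by
      intro z
      by_cases hz : z ∈ Ioo 0 (η q)
      · rw [hF2, Set.indicator_of_mem ((hmem z).2 hz), Set.indicator_of_mem hz]
      · rw [hF2, Set.indicator_of_notMem (fun h => hz ((hmem z).1 h)),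
          Set.indicator_of_notMem hz]
    rw [integral_congr_ae (Filter.Eventually.of_forall hrw1),
      integral_congr_ae (Filter.Eventually.of_forall hrw2),
      integral_indicator measurableSet_Ioo, integral_indicator measurableSet_Ioo]
    set h := η q with hh
    have hh0 : 0 < h := hηpos q
    have hhM : h < M := lt_of_le_of_lt (hηs q) hsM
    -- inner 1d Poincaré
    have hcurve : Continuous (fun t : ℝ => ((q, t) : E3)) :=
      continuous_const.prodMk continuous_id
    have hboxmem : ∀ t ∈ Ioc (0:ℝ) h, ((q, t) : E3) ∈ boxS M := by
      intro t ht
      exact ⟨hq, ht.1, lt_of_le_of_lt ht.2 hhM⟩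
    have hφc : ContinuousOn (fun t => g (q, t)) (Icc 0 h) := by
      apply hg.continuousOn.comp hcurve.continuousOn
      intro t ht
      exact ht.1
    have hd : ∀ t ∈ Ioo (0:ℝ) h, HasDerivAt (fun t => g (q, t)) (pdZ g (q, t)) t := by
      intro t ht
      have hdiff : DifferentiableAt ℝ g ((q, t) : E3) :=
        (hg.contDiffAt (Filter.mem_of_superset (isOpen_Hopen.mem_nhds ht.1)
          Hopen_subset_Hplane)).differentiableAt one_ne_zero
      exact hasDerivAt_sliceZ' hdiff
    have hdcont : ContinuousOn (fun t => pdZ g (q, t)) (Ioo 0 h) := by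
      apply hpdH.comp hcurve.continuousOn
      intro t ht
      exact ht.1
    have hdi : IntegrableOn (fun t => pdZ g (q, t)) (Ioc 0 h) := by
      rw [integrableOn_Ioc_iff_integrableOn_Ioo]
      refine myIntOn measurableSet_Ioo (by rw [Real.volume_Ioo]; exact ENNReal.ofReal_lt_top)
        hdcont (B := B) ?_
      intro t ht
      exact (hB _ (hboxmem t ⟨ht.1, ht.2.le⟩)).2
    have hdi2 : IntegrableOn (fun t => pdZ g (q, t) ^ 2) (Ioc 0 h) := by
      rw [integrableOn_Ioc_iff_integrableOn_Ioo]
      refine myIntOn measurableSet_Ioo (by rw [Real.volume_Ioo]; exact ENNReal.ofReal_lt_top)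
        (hdcont.pow 2) (B := B ^ 2) ?_
      intro t ht
      rw [abs_pow]
      exact pow_le_pow_left₀ (abs_nonneg _) (hB _ (hboxmem t ⟨ht.1, ht.2.le⟩)).2 2
    have hφ2i : IntegrableOn (fun t => g (q, t) ^ 2) (Ioo 0 h) :=
      ((hφc.pow 2).integrableOn_compact isCompact_Icc).mono_set Ioo_subset_Icc_self
    have hpo := poincare_1d hh0 (hηs q) (hg0 q) hφc hd hdi hdi2 hφ2i
    calc ∫ t in Ioo 0 h, g (q, t) ^ 2 ≤ s ^ 2 * ∫ t in Ioo 0 h, pdZ g (q, t) ^ 2 := hpo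
      _ = ∫ t in Ioo 0 h, s ^ 2 * pdZ g (q, t) ^ 2 := (integral_const_mul _ _).symm
  · have hrw1 : ∀ z : ℝ, F1 (q, z) = 0 := fun z =>
      Set.indicator_of_notMem (fun hmem => hq hmem.1) _
    have hrw2 : ∀ z : ℝ, F2 (q, z) = 0 := fun z =>
      Set.indicator_of_notMem (fun hmem => hq hmem.1) _
    rw [integral_congr_ae (Filter.Eventually.of_forall hrw1),
      integral_congr_ae (Filter.Eventually.of_forall hrw2)]

end KornAux

open MeasureTheory Real Set Matrix Filter Topology
namespace KornAux

lemma pdX_smooth {g : E3 → ℝ} (hg : ContDiff ℝ (⊤ : ℕ∞) g) : ContDiff ℝ (⊤ : ℕ∞) (pdX g) := by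
  have : pdX g = fun p => fderiv ℝ g p vX := funext fun p => pdX_eq (hg.differentiable (by simp) p)
  rw [this]; exact diff_pd_apply hg vX
lemma pdY_smooth {g : E3 → ℝ} (hg : ContDiff ℝ (⊤ : ℕ∞) g) : ContDiff ℝ (⊤ : ℕ∞) (pdY g) := by
  have : pdY g = fun p => fderiv ℝ g p vY := funext fun p => pdY_eq (hg.differentiable (by simp) p)
  rw [this]; exact diff_pd_apply hg vY
lemma pdZ_smooth {g : E3 → ℝ} (hg : ContDiff ℝ (⊤ : ℕ∞) g) : ContDiff ℝ (⊤ : ℕ∞) (pdZ g) := by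
  have : pdZ g = fun p => fderiv ℝ g p vZ := funext fun p => pdZ_eq (hg.differentiable (by simp) p)
  rw [this]; exact diff_pd_apply hg vZ

lemma cross_XZ {η : ℝ × ℝ → ℝ} {M : ℝ} (hM0 : 0 < M) (hηc : Continuous η)
    (hηM : ∀ q, η q < M) {w g : E3 → ℝ}
    (hw : ContDiffOn ℝ 1 w Hplane)
    (hwperx : ∀ x y z : ℝ, w ((x + 1, y), z) = w ((x, y), z))
    (hgsm : ContDiff ℝ (⊤ : ℕ∞) g) (hgsupp : tsupport g ⊆ OmegaFull η)
    (hgperx : ∀ x y z : ℝ, g ((x + 1, y), z) = g ((x, y), z)) :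
    ∫ p in OmegaSet η, pdZ g p * pdX w p = ∫ p in OmegaSet η, pdX g p * pdZ w p := by
  set K := tsupport g with hKdef
  have hK : IsClosed K := isClosed_tsupport g
  have hKΩ : K ⊆ OmegaFull η := hgsupp
  have hKH : K ⊆ Hopen := fun p hp => (hKΩ hp).1
  have hKM : ∀ p ∈ K, p.2 < M := fun p hp => lt_trans (hKΩ hp).2 (hηM p.1)
  have hg0 : ∀ p ∉ K, g p = 0 := fun p hp => image_eq_zero_of_notMem_tsupport hp
  have hpdg0 := fun p hp => pd_zero_of_zero_off_closed hK hg0 (p := p) hp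
  have hwH : ContDiffOn ℝ 1 w Hopen := hw.mono Hopen_subset_Hplane
  -- the integrands
  set f1 : E3 → ℝ := fun p => pdZ g p * pdX w p with hf1
  set f2 : E3 → ℝ := fun p => pdX g p * pdZ w p with hf2
  have hf1cont : ContinuousOn f1 Hopen :=
    ((pdZ_smooth hgsm).continuous.continuousOn).mul (pdX_continuousOn hwH)
  have hf2cont : ContinuousOn f2 Hopen :=
    ((pdX_smooth hgsm).continuous.continuousOn).mul (pdZ_continuousOn hwH)
  have hf1z : ∀ p ∉ K, f1 p = 0 := fun p hp => by
    rw [hf1]; dsimp only; rw [(hpdg0 p hp).2.2.2, zero_mul]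
  have hf2z : ∀ p ∉ K, f2 p = 0 := fun p hp => by
    rw [hf2]; dsimp only; rw [(hpdg0 p hp).2.1, zero_mul]
  have hint1 : IntegrableOn f1 (boxS M) := integrableOn_pd_box hK hKH hf1z hf1cont
  have hint2 : IntegrableOn f2 (boxS M) := integrableOn_pd_box hK hKH hf2z hf2cont
  -- extension from OmegaSet to box
  have hΩbox : OmegaSet η ⊆ boxS M := by
    rintro ⟨q, z⟩ ⟨hq, hz0, hzη⟩
    exact ⟨hq, hz0, lt_trans hzη (hηM q)⟩
  have hext : ∀ f : E3 → ℝ, (∀ p ∉ K, f p = 0) →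
      ∫ p in OmegaSet η, f p = ∫ p in boxS M, f p := by
    intro f hfz
    have heq : (OmegaSet η).indicator f = (boxS M).indicator f := by
      funext p
      by_cases hpΩ : p ∈ OmegaSet η
      · rw [Set.indicator_of_mem hpΩ, Set.indicator_of_mem (hΩbox hpΩ)]
      · rw [Set.indicator_of_notMem hpΩ]
        by_cases hpb : p ∈ boxS M
        · rw [Set.indicator_of_mem hpb]
          have hpK : p ∉ K := by
            intro hpK
            apply hpΩ
            exact ⟨hpb.1, (hKΩ hpK).1, (hKΩ hpK).2⟩
          exact (hfz p hpK).symm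
        · rw [Set.indicator_of_notMem hpb]
      
    rw [← integral_indicator (isOpen_OmegaSet hηc).measurableSet, heq,
      integral_indicator (isOpen_box M).measurableSet]
  rw [hext f1 hf1z, hext f2 hf2z]
  -- Φ and Ψ
  set Φ : E3 → ℝ := fun p => w p * pdZ g p with hΦdef
  set Ψ : E3 → ℝ := fun p => w p * pdX g p with hΨdef
  have hΦ0 : ∀ p ∉ K, Φ p = 0 := fun p hp => by
    rw [hΦdef]; dsimp only; rw [(hpdg0 p hp).2.2.2, mul_zero]
  have hΨ0 : ∀ p ∉ K, Ψ p = 0 := fun p hp => by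
    rw [hΨdef]; dsimp only; rw [(hpdg0 p hp).2.1, mul_zero]
  have hΦC1 : ContDiffOn ℝ 1 Φ Hopen :=
    hwH.mul (((pdZ_smooth hgsm).of_le (by simp)).contDiffOn)
  have hΨC1 : ContDiffOn ℝ 1 Ψ Hopen :=
    hwH.mul (((pdX_smooth hgsm).of_le (by simp)).contDiffOn)
  have hΦper : ∀ x y z : ℝ, Φ ((x + 1, y), z) = Φ ((x, y), z) := by
    intro x y z
    rw [hΦdef]; dsimp only
    rw [hwperx x y z, pdZ_shift_x hgperx x y z]
  -- pointwise identity on box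
  have hptw : ∀ p ∈ boxS M, f1 p - f2 p = pdX Φ p - pdZ Ψ p := by
    intro p hp
    have hz : (0:ℝ) < p.2 := box_subset_Hopen M hp
    have hwd : DifferentiableAt ℝ w p :=
      ((hw.contDiffAt (Filter.mem_of_superset (isOpen_Hopen.mem_nhds hz)
        Hopen_subset_Hplane)).differentiableAt one_ne_zero)
    have h1 : pdX Φ p = pdX w p * pdZ g p + w p * pdX (pdZ g) p :=
      pdX_mul hwd (((pdZ_smooth hgsm).differentiable (by simp)) p)
    have h2 : pdZ Ψ p = pdZ w p * pdX g p + w p * pdZ (pdX g) p :=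
      pdZ_mul hwd (((pdX_smooth hgsm).differentiable (by simp)) p)
    have h3 : pdX (pdZ g) p = pdZ (pdX g) p := pdX_pdZ_comm hgsm p
    rw [h1, h2, h3, hf1, hf2]
    dsimp only
    ring
  -- combine
  have hIΦ : ∫ p in boxS M, pdX Φ p = 0 := ibp_X hM0 hK hKH hΦ0 hΦC1 hΦper
  have hIΨ : ∫ p in boxS M, pdZ Ψ p = 0 := ibp_Z hM0 hK hKH hKM hΨ0 hΨC1
  have hsub : ∫ p in boxS M, (f1 p - f2 p) = 0 := by
    have hcongr : ∫ p in boxS M, (f1 p - f2 p) = ∫ p in boxS M, (pdX Φ p - pdZ Ψ p) :=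
      setIntegral_congr_fun (isOpen_box M).measurableSet hptw
    have hintΦ : IntegrableOn (pdX Φ) (boxS M) :=
      integrableOn_pd_box hK hKH
        (fun p hp => (pd_zero_of_zero_off_closed hK hΦ0 hp).2.1)
        (pdX_continuousOn hΦC1)
    have hintΨ : IntegrableOn (pdZ Ψ) (boxS M) :=
      integrableOn_pd_box hK hKH
        (fun p hp => (pd_zero_of_zero_off_closed hK hΨ0 hp).2.2.2)
        (pdZ_continuousOn hΨC1)
    rw [hcongr, integral_sub hintΦ hintΨ, hIΦ, hIΨ, sub_zero]
  have hfin : (∫ p in boxS M, f1 p) - ∫ p in boxS M, f2 p = 0 := by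
    rw [← integral_sub hint1 hint2]
    exact hsub
  linarith

end KornAux

open MeasureTheory Real Set Matrix Filter Topology
namespace KornAux

lemma cross_XY {η : ℝ × ℝ → ℝ} {M : ℝ} (hM0 : 0 < M) (hηc : Continuous η)
    (hηM : ∀ q, η q < M) {w g : E3 → ℝ}
    (hw : ContDiffOn ℝ 1 w Hplane)
    (hwperx : ∀ x y z : ℝ, w ((x + 1, y), z) = w ((x, y), z))
    (hwpery : ∀ x y z : ℝ, w ((x, y + 1), z) = w ((x, y), z))
    (hgsm : ContDiff ℝ (⊤ : ℕ∞) g) (hgsupp : tsupport g ⊆ OmegaFull η)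
    (hgperx : ∀ x y z : ℝ, g ((x + 1, y), z) = g ((x, y), z))
    (hgpery : ∀ x y z : ℝ, g ((x, y + 1), z) = g ((x, y), z)) :
    ∫ p in OmegaSet η, pdY g p * pdX w p = ∫ p in OmegaSet η, pdX g p * pdY w p := by
  set K := tsupport g with hKdef
  have hK : IsClosed K := isClosed_tsupport g
  have hKΩ : K ⊆ OmegaFull η := hgsupp
  have hKH : K ⊆ Hopen := fun p hp => (hKΩ hp).1
  have hKM : ∀ p ∈ K, p.2 < M := fun p hp => lt_trans (hKΩ hp).2 (hηM p.1)
  have hg0 : ∀ p ∉ K, g p = 0 := fun p hp => image_eq_zero_of_notMem_tsupport hp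
  have hpdg0 := fun p hp => pd_zero_of_zero_off_closed hK hg0 (p := p) hp
  have hwH : ContDiffOn ℝ 1 w Hopen := hw.mono Hopen_subset_Hplane
  -- the integrands
  set f1 : E3 → ℝ := fun p => pdY g p * pdX w p with hf1
  set f2 : E3 → ℝ := fun p => pdX g p * pdY w p with hf2
  have hf1cont : ContinuousOn f1 Hopen :=
    ((pdY_smooth hgsm).continuous.continuousOn).mul (pdX_continuousOn hwH)
  have hf2cont : ContinuousOn f2 Hopen :=
    ((pdX_smooth hgsm).continuous.continuousOn).mul (pdY_continuousOn hwH)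
  have hf1z : ∀ p ∉ K, f1 p = 0 := fun p hp => by
    rw [hf1]; dsimp only; rw [(hpdg0 p hp).2.2.1, zero_mul]
  have hf2z : ∀ p ∉ K, f2 p = 0 := fun p hp => by
    rw [hf2]; dsimp only; rw [(hpdg0 p hp).2.1, zero_mul]
  have hint1 : IntegrableOn f1 (boxS M) := integrableOn_pd_box hK hKH hf1z hf1cont
  have hint2 : IntegrableOn f2 (boxS M) := integrableOn_pd_box hK hKH hf2z hf2cont
  -- extension from OmegaSet to box
  have hΩbox : OmegaSet η ⊆ boxS M := by
    rintro ⟨q, z⟩ ⟨hq, hz0, hzη⟩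
    exact ⟨hq, hz0, lt_trans hzη (hηM q)⟩
  have hext : ∀ f : E3 → ℝ, (∀ p ∉ K, f p = 0) →
      ∫ p in OmegaSet η, f p = ∫ p in boxS M, f p := by
    intro f hfz
    have heq : (OmegaSet η).indicator f = (boxS M).indicator f := by
      funext p
      by_cases hpΩ : p ∈ OmegaSet η
      · rw [Set.indicator_of_mem hpΩ, Set.indicator_of_mem (hΩbox hpΩ)]
      · rw [Set.indicator_of_notMem hpΩ]
        by_cases hpb : p ∈ boxS M
        · rw [Set.indicator_of_mem hpb]
          have hpK : p ∉ K := by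
            intro hpK
            apply hpΩ
            exact ⟨hpb.1, (hKΩ hpK).1, (hKΩ hpK).2⟩
          exact (hfz p hpK).symm
        · rw [Set.indicator_of_notMem hpb]
      
    rw [← integral_indicator (isOpen_OmegaSet hηc).measurableSet, heq,
      integral_indicator (isOpen_box M).measurableSet]
  rw [hext f1 hf1z, hext f2 hf2z]
  -- Φ and Ψ
  set Φ : E3 → ℝ := fun p => w p * pdY g p with hΦdef
  set Ψ : E3 → ℝ := fun p => w p * pdX g p with hΨdef
  have hΦ0 : ∀ p ∉ K, Φ p = 0 := fun p hp => by
    rw [hΦdef]; dsimp only; rw [(hpdg0 p hp).2.2.1, mul_zero]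
  have hΨ0 : ∀ p ∉ K, Ψ p = 0 := fun p hp => by
    rw [hΨdef]; dsimp only; rw [(hpdg0 p hp).2.1, mul_zero]
  have hΦC1 : ContDiffOn ℝ 1 Φ Hopen :=
    hwH.mul (((pdY_smooth hgsm).of_le (by simp)).contDiffOn)
  have hΨC1 : ContDiffOn ℝ 1 Ψ Hopen :=
    hwH.mul (((pdX_smooth hgsm).of_le (by simp)).contDiffOn)
  have hΦper : ∀ x y z : ℝ, Φ ((x + 1, y), z) = Φ ((x, y), z) := by
    intro x y z
    rw [hΦdef]; dsimp only
    rw [hwperx x y z, pdY_shift_x hgperx x y z]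
  have hΨper : ∀ x y z : ℝ, Ψ ((x, y + 1), z) = Ψ ((x, y), z) := by
    intro x y z
    rw [hΨdef]; dsimp only
    rw [hwpery x y z, pdX_shift_y hgpery x y z]
  -- pointwise identity on box
  have hptw : ∀ p ∈ boxS M, f1 p - f2 p = pdX Φ p - pdY Ψ p := by
    intro p hp
    have hz : (0:ℝ) < p.2 := box_subset_Hopen M hp
    have hwd : DifferentiableAt ℝ w p :=
      ((hw.contDiffAt (Filter.mem_of_superset (isOpen_Hopen.mem_nhds hz)
        Hopen_subset_Hplane)).differentiableAt one_ne_zero)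
    have h1 : pdX Φ p = pdX w p * pdY g p + w p * pdX (pdY g) p :=
      pdX_mul hwd (((pdY_smooth hgsm).differentiable (by simp)) p)
    have h2 : pdY Ψ p = pdY w p * pdX g p + w p * pdY (pdX g) p :=
      pdY_mul hwd (((pdX_smooth hgsm).differentiable (by simp)) p)
    have h3 : pdX (pdY g) p = pdY (pdX g) p := pdX_pdY_comm hgsm p
    rw [h1, h2, h3, hf1, hf2]
    dsimp only
    ring
  -- combine
  have hIΦ : ∫ p in boxS M, pdX Φ p = 0 := ibp_X hM0 hK hKH hΦ0 hΦC1 hΦper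
  have hIΨ : ∫ p in boxS M, pdY Ψ p = 0 := ibp_Y hM0 hK hKH hΨ0 hΨC1 hΨper
  have hsub : ∫ p in boxS M, (f1 p - f2 p) = 0 := by
    have hcongr : ∫ p in boxS M, (f1 p - f2 p) = ∫ p in boxS M, (pdX Φ p - pdY Ψ p) :=
      setIntegral_congr_fun (isOpen_box M).measurableSet hptw
    have hintΦ : IntegrableOn (pdX Φ) (boxS M) :=
      integrableOn_pd_box hK hKH
        (fun p hp => (pd_zero_of_zero_off_closed hK hΦ0 hp).2.1)
        (pdX_continuousOn hΦC1)
    have hintΨ : IntegrableOn (pdY Ψ) (boxS M) :=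
      integrableOn_pd_box hK hKH
        (fun p hp => (pd_zero_of_zero_off_closed hK hΨ0 hp).2.2.1)
        (pdY_continuousOn hΨC1)
    rw [hcongr, integral_sub hintΦ hintΨ, hIΦ, hIΨ, sub_zero]
  have hfin : (∫ p in boxS M, f1 p) - ∫ p in boxS M, f2 p = 0 := by
    rw [← integral_sub hint1 hint2]
    exact hsub
  linarith

lemma cross_YZ {η : ℝ × ℝ → ℝ} {M : ℝ} (hM0 : 0 < M) (hηc : Continuous η)
    (hηM : ∀ q, η q < M) {w g : E3 → ℝ}
    (hw : ContDiffOn ℝ 1 w Hplane)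
    (hwpery : ∀ x y z : ℝ, w ((x, y + 1), z) = w ((x, y), z))
    (hgsm : ContDiff ℝ (⊤ : ℕ∞) g) (hgsupp : tsupport g ⊆ OmegaFull η)
    (hgpery : ∀ x y z : ℝ, g ((x, y + 1), z) = g ((x, y), z)) :
    ∫ p in OmegaSet η, pdZ g p * pdY w p = ∫ p in OmegaSet η, pdY g p * pdZ w p := by
  set K := tsupport g with hKdef
  have hK : IsClosed K := isClosed_tsupport g
  have hKΩ : K ⊆ OmegaFull η := hgsupp
  have hKH : K ⊆ Hopen := fun p hp => (hKΩ hp).1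
  have hKM : ∀ p ∈ K, p.2 < M := fun p hp => lt_trans (hKΩ hp).2 (hηM p.1)
  have hg0 : ∀ p ∉ K, g p = 0 := fun p hp => image_eq_zero_of_notMem_tsupport hp
  have hpdg0 := fun p hp => pd_zero_of_zero_off_closed hK hg0 (p := p) hp
  have hwH : ContDiffOn ℝ 1 w Hopen := hw.mono Hopen_subset_Hplane
  -- the integrands
  set f1 : E3 → ℝ := fun p => pdZ g p * pdY w p with hf1
  set f2 : E3 → ℝ := fun p => pdY g p * pdZ w p with hf2
  have hf1cont : ContinuousOn f1 Hopen :=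
    ((pdZ_smooth hgsm).continuous.continuousOn).mul (pdY_continuousOn hwH)
  have hf2cont : ContinuousOn f2 Hopen :=
    ((pdY_smooth hgsm).continuous.continuousOn).mul (pdZ_continuousOn hwH)
  have hf1z : ∀ p ∉ K, f1 p = 0 := fun p hp => by
    rw [hf1]; dsimp only; rw [(hpdg0 p hp).2.2.2, zero_mul]
  have hf2z : ∀ p ∉ K, f2 p = 0 := fun p hp => by
    rw [hf2]; dsimp only; rw [(hpdg0 p hp).2.2.1, zero_mul]
  have hint1 : IntegrableOn f1 (boxS M) := integrableOn_pd_box hK hKH hf1z hf1cont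
  have hint2 : IntegrableOn f2 (boxS M) := integrableOn_pd_box hK hKH hf2z hf2cont
  -- extension from OmegaSet to box
  have hΩbox : OmegaSet η ⊆ boxS M := by
    rintro ⟨q, z⟩ ⟨hq, hz0, hzη⟩
    exact ⟨hq, hz0, lt_trans hzη (hηM q)⟩
  have hext : ∀ f : E3 → ℝ, (∀ p ∉ K, f p = 0) →
      ∫ p in OmegaSet η, f p = ∫ p in boxS M, f p := by
    intro f hfz
    have heq : (OmegaSet η).indicator f = (boxS M).indicator f := by
      funext p
      by_cases hpΩ : p ∈ OmegaSet η
      · rw [Set.indicator_of_mem hpΩ, Set.indicator_of_mem (hΩbox hpΩ)]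
      · rw [Set.indicator_of_notMem hpΩ]
        by_cases hpb : p ∈ boxS M
        · rw [Set.indicator_of_mem hpb]
          have hpK : p ∉ K := by
            intro hpK
            apply hpΩ
            exact ⟨hpb.1, (hKΩ hpK).1, (hKΩ hpK).2⟩
          exact (hfz p hpK).symm
        · rw [Set.indicator_of_notMem hpb]
      
    rw [← integral_indicator (isOpen_OmegaSet hηc).measurableSet, heq,
      integral_indicator (isOpen_box M).measurableSet]
  rw [hext f1 hf1z, hext f2 hf2z]
  -- Φ and Ψ
  set Φ : E3 → ℝ := fun p => w p * pdZ g p with hΦdef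
  set Ψ : E3 → ℝ := fun p => w p * pdY g p with hΨdef
  have hΦ0 : ∀ p ∉ K, Φ p = 0 := fun p hp => by
    rw [hΦdef]; dsimp only; rw [(hpdg0 p hp).2.2.2, mul_zero]
  have hΨ0 : ∀ p ∉ K, Ψ p = 0 := fun p hp => by
    rw [hΨdef]; dsimp only; rw [(hpdg0 p hp).2.2.1, mul_zero]
  have hΦC1 : ContDiffOn ℝ 1 Φ Hopen :=
    hwH.mul (((pdZ_smooth hgsm).of_le (by simp)).contDiffOn)
  have hΨC1 : ContDiffOn ℝ 1 Ψ Hopen :=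
    hwH.mul (((pdY_smooth hgsm).of_le (by simp)).contDiffOn)
  have hΦper : ∀ x y z : ℝ, Φ ((x, y + 1), z) = Φ ((x, y), z) := by
    intro x y z
    rw [hΦdef]; dsimp only
    rw [hwpery x y z, pdZ_shift_y hgpery x y z]
  -- pointwise identity on box
  have hptw : ∀ p ∈ boxS M, f1 p - f2 p = pdY Φ p - pdZ Ψ p := by
    intro p hp
    have hz : (0:ℝ) < p.2 := box_subset_Hopen M hp
    have hwd : DifferentiableAt ℝ w p :=
      ((hw.contDiffAt (Filter.mem_of_superset (isOpen_Hopen.mem_nhds hz)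
        Hopen_subset_Hplane)).differentiableAt one_ne_zero)
    have h1 : pdY Φ p = pdY w p * pdZ g p + w p * pdY (pdZ g) p :=
      pdY_mul hwd (((pdZ_smooth hgsm).differentiable (by simp)) p)
    have h2 : pdZ Ψ p = pdZ w p * pdY g p + w p * pdZ (pdY g) p :=
      pdZ_mul hwd (((pdY_smooth hgsm).differentiable (by simp)) p)
    have h3 : pdY (pdZ g) p = pdZ (pdY g) p := pdY_pdZ_comm hgsm p
    rw [h1, h2, h3, hf1, hf2]
    dsimp only
    ring
  -- combine
  have hIΦ : ∫ p in boxS M, pdY Φ p = 0 := ibp_Y hM0 hK hKH hΦ0 hΦC1 hΦper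
  have hIΨ : ∫ p in boxS M, pdZ Ψ p = 0 := ibp_Z hM0 hK hKH hKM hΨ0 hΨC1
  have hsub : ∫ p in boxS M, (f1 p - f2 p) = 0 := by
    have hcongr : ∫ p in boxS M, (f1 p - f2 p) = ∫ p in boxS M, (pdY Φ p - pdZ Ψ p) :=
      setIntegral_congr_fun (isOpen_box M).measurableSet hptw
    have hintΦ : IntegrableOn (pdY Φ) (boxS M) :=
      integrableOn_pd_box hK hKH
        (fun p hp => (pd_zero_of_zero_off_closed hK hΦ0 hp).2.2.1)
        (pdY_continuousOn hΦC1)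
    have hintΨ : IntegrableOn (pdZ Ψ) (boxS M) :=
      integrableOn_pd_box hK hKH
        (fun p hp => (pd_zero_of_zero_off_closed hK hΨ0 hp).2.2.2)
        (pdZ_continuousOn hΨC1)
    rw [hcongr, integral_sub hintΦ hintΨ, hIΦ, hIΨ, sub_zero]
  have hfin : (∫ p in boxS M, f1 p) - ∫ p in boxS M, f2 p = 0 := by
    rw [← integral_sub hint1 hint2]
    exact hsub
  linarith


end KornAux


set_option maxHeartbeats 2000000 in
/-- Korn–Poincaré type estimate: there is `C > 0` depending only on `μ`
such that `∫_{Ω^η} (|u|² + |∇u|²) ≤ C (1 + sup_Γ η)² ∫_{Ω^η} 𝕊(∇u) : ∇u` for all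
`u = (u₁,u₂,u₃)` with `u₁, u₂` smooth compactly supported in `Ω^η` and `u₃ = 0` on
`{z = 0}`. -/
theorem korn_poincare_estimate (μ lam : ℝ) (hμ : 0 < μ) (hlam : 0 ≤ lam) :
    ∃ C : ℝ, 0 < C ∧
      ∀ (η : ℝ × ℝ → ℝ) (u : (ℝ × ℝ) × ℝ → Fin 3 → ℝ),
        Continuous η → (∀ q, 0 < η q) → PeriodicTorus η →
        ContDiffOn ℝ 1 u {p : (ℝ × ℝ) × ℝ | 0 ≤ p.2} →
        (∀ x y z : ℝ, u ((x + 1, y), z) = u ((x, y), z) ∧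
          u ((x, y + 1), z) = u ((x, y), z)) →
        (∀ i : Fin 3, i = 0 ∨ i = 1 →
          ContDiff ℝ (⊤ : ℕ∞) (fun p => u p i) ∧ tsupport (fun p => u p i) ⊆ OmegaFull η) →
        (∀ q : ℝ × ℝ, u (q, 0) 2 = 0) →
        (∫ p in OmegaSet η, ((∑ i : Fin 3, (u p i) ^ 2) + frob (jac3 u p) (jac3 u p))) ≤
          C * (1 + sSup (Set.range η)) ^ 2 *
            ∫ p in OmegaSet η, frob (Svisc μ lam (jac3 u p)) (jac3 u p) := by

  refine ⟨1 / μ, by positivity, ?_⟩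
  intro η u hηc hηpos hηper hu huper husupp hu30
  have hv : ∀ i : Fin 3, ContDiffOn ℝ 1 (fun p => u p i) KornAux.Hplane := fun i =>
    (contDiffOn_pi.1 hu) i
  obtain ⟨hsm0, hsupp0⟩ := husupp 0 (Or.inl rfl)
  obtain ⟨hsm1, hsupp1⟩ := husupp 1 (Or.inr rfl)
  have hperx : ∀ (i : Fin 3) (x y z : ℝ), u ((x+1,y),z) i = u ((x,y),z) i :=
    fun i x y z => congrFun (huper x y z).1 i
  have hpery : ∀ (i : Fin 3) (x y z : ℝ), u ((x,y+1),z) i = u ((x,y),z) i :=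
    fun i x y z => congrFun (huper x y z).2 i
  set s := sSup (Set.range η) with hsdef
  have hηs : ∀ q, η q ≤ s := KornAux.eta_le_sSup hηc hηper
  have hs0 : 0 < s := lt_of_lt_of_le (hηpos (0,0)) (hηs (0,0))
  set M := s + 1 with hMdef
  have hsM : s < M := lt_add_one s
  have hM0 : 0 < M := by linarith
  have hηM : ∀ q, η q < M := fun q => lt_of_le_of_lt (hηs q) hsM
  have hΩm : MeasurableSet (OmegaSet η) := (KornAux.isOpen_OmegaSet hηc).measurableSet
  have hΩbox : OmegaSet η ⊆ KornAux.boxS M := KornAux.omega_subset_box hηs hsM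
  have hΩH : OmegaSet η ⊆ KornAux.Hopen := KornAux.omega_subset_Hopen η
  have hΩvol : volume (OmegaSet η) < ⊤ :=
    lt_of_le_of_lt (measure_mono hΩbox) (KornAux.volume_box_lt M)
  -- bounds
  obtain ⟨B0, hB00, hB0⟩ := KornAux.bound_pd_on_box (hv 0) M
  obtain ⟨B1, hB10, hB1⟩ := KornAux.bound_pd_on_box (hv 1) M
  obtain ⟨B2, hB20, hB2⟩ := KornAux.bound_pd_on_box (hv 2) M
  set B := max B0 (max B1 B2) with hBdef
  have hBnn : 0 ≤ B := le_trans hB00 (le_max_left _ _)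
  have hle0 : B0 ≤ B := le_max_left _ _
  have hle1 : B1 ≤ B := le_trans (le_max_left _ _) (le_max_right _ _)
  have hle2 : B2 ≤ B := le_trans (le_max_right _ _) (le_max_right _ _)
  have hBv0 : ∀ p ∈ KornAux.boxS M, |(fun q => u q 0) p| ≤ B := fun p hp => le_trans (hB0 p hp).1 hle0
  have hBv1 : ∀ p ∈ KornAux.boxS M, |(fun q => u q 1) p| ≤ B := fun p hp => le_trans (hB1 p hp).1 hle1
  have hBv2 : ∀ p ∈ KornAux.boxS M, |(fun q => u q 2) p| ≤ B := fun p hp => le_trans (hB2 p hp).1 hle2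
  have hBa : ∀ p ∈ KornAux.boxS M, |pdX (fun q => u q 0) p| ≤ B := fun p hp => le_trans (hB0 p hp).2.1 hle0
  have hBb : ∀ p ∈ KornAux.boxS M, |pdY (fun q => u q 0) p| ≤ B := fun p hp => le_trans (hB0 p hp).2.2.1 hle0
  have hBc : ∀ p ∈ KornAux.boxS M, |pdZ (fun q => u q 0) p| ≤ B := fun p hp => le_trans (hB0 p hp).2.2.2 hle0
  have hBd : ∀ p ∈ KornAux.boxS M, |pdX (fun q => u q 1) p| ≤ B := fun p hp => le_trans (hB1 p hp).2.1 hle1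
  have hBe : ∀ p ∈ KornAux.boxS M, |pdY (fun q => u q 1) p| ≤ B := fun p hp => le_trans (hB1 p hp).2.2.1 hle1
  have hBf : ∀ p ∈ KornAux.boxS M, |pdZ (fun q => u q 1) p| ≤ B := fun p hp => le_trans (hB1 p hp).2.2.2 hle1
  have hBg : ∀ p ∈ KornAux.boxS M, |pdX (fun q => u q 2) p| ≤ B := fun p hp => le_trans (hB2 p hp).2.1 hle2
  have hBh : ∀ p ∈ KornAux.boxS M, |pdY (fun q => u q 2) p| ≤ B := fun p hp => le_trans (hB2 p hp).2.2.1 hle2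
  have hBk : ∀ p ∈ KornAux.boxS M, |pdZ (fun q => u q 2) p| ≤ B := fun p hp => le_trans (hB2 p hp).2.2.2 hle2
  -- continuity
  have hcv0 : ContinuousOn (fun q => u q 0) KornAux.Hopen :=
    (hv 0).continuousOn.mono KornAux.Hopen_subset_Hplane
  have hcv1 : ContinuousOn (fun q => u q 1) KornAux.Hopen :=
    (hv 1).continuousOn.mono KornAux.Hopen_subset_Hplane
  have hcv2 : ContinuousOn (fun q => u q 2) KornAux.Hopen :=
    (hv 2).continuousOn.mono KornAux.Hopen_subset_Hplane
  have hca : ContinuousOn (pdX (fun q => u q 0)) KornAux.Hopen :=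
    KornAux.pdX_continuousOn ((hv 0).mono KornAux.Hopen_subset_Hplane)
  have hcb : ContinuousOn (pdY (fun q => u q 0)) KornAux.Hopen :=
    KornAux.pdY_continuousOn ((hv 0).mono KornAux.Hopen_subset_Hplane)
  have hcc : ContinuousOn (pdZ (fun q => u q 0)) KornAux.Hopen :=
    KornAux.pdZ_continuousOn ((hv 0).mono KornAux.Hopen_subset_Hplane)
  have hcd : ContinuousOn (pdX (fun q => u q 1)) KornAux.Hopen :=
    KornAux.pdX_continuousOn ((hv 1).mono KornAux.Hopen_subset_Hplane)
  have hce : ContinuousOn (pdY (fun q => u q 1)) KornAux.Hopen :=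
    KornAux.pdY_continuousOn ((hv 1).mono KornAux.Hopen_subset_Hplane)
  have hcf : ContinuousOn (pdZ (fun q => u q 1)) KornAux.Hopen :=
    KornAux.pdZ_continuousOn ((hv 1).mono KornAux.Hopen_subset_Hplane)
  have hcg : ContinuousOn (pdX (fun q => u q 2)) KornAux.Hopen :=
    KornAux.pdX_continuousOn ((hv 2).mono KornAux.Hopen_subset_Hplane)
  have hch : ContinuousOn (pdY (fun q => u q 2)) KornAux.Hopen :=
    KornAux.pdY_continuousOn ((hv 2).mono KornAux.Hopen_subset_Hplane)
  have hck : ContinuousOn (pdZ (fun q => u q 2)) KornAux.Hopen :=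
    KornAux.pdZ_continuousOn ((hv 2).mono KornAux.Hopen_subset_Hplane)
  -- integrability helpers
  have hmul : ∀ {f g : KornAux.E3 → ℝ}, ContinuousOn f KornAux.Hopen →
      ContinuousOn g KornAux.Hopen → (∀ p ∈ KornAux.boxS M, |f p| ≤ B) →
      (∀ p ∈ KornAux.boxS M, |g p| ≤ B) →
      IntegrableOn (fun p => f p * g p) (OmegaSet η) volume := by
    intro f g hf hg hBF hBG
    refine KornAux.myIntOn hΩm hΩvol ((hf.mul hg).mono hΩH) (B := B * B) ?_
    intro p hp
    rw [abs_mul]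
    exact mul_le_mul (hBF p (hΩbox hp)) (hBG p (hΩbox hp)) (abs_nonneg _) hBnn
  have hsq : ∀ {f : KornAux.E3 → ℝ}, ContinuousOn f KornAux.Hopen →
      (∀ p ∈ KornAux.boxS M, |f p| ≤ B) →
      IntegrableOn (fun p => f p ^ 2) (OmegaSet η) volume := by
    intro f hf hBF
    have h1 := hmul hf hf hBF hBF
    have heq : (fun p => f p ^ 2) = (fun p => f p * f p) := by funext p; ring
    rw [heq]
    exact h1
  have hiU0 := hsq hcv0 hBv0
  have hiU1 := hsq hcv1 hBv1
  have hiU2 := hsq hcv2 hBv2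
  have hia := hsq hca hBa
  have hib := hsq hcb hBb
  have hic := hsq hcc hBc
  have hid := hsq hcd hBd
  have hie := hsq hce hBe
  have hif := hsq hcf hBf
  have hig := hsq hcg hBg
  have hih := hsq hch hBh
  have hik := hsq hck hBk
  have hibd := hmul hcb hcd hBb hBd
  have hicg := hmul hcc hcg hBc hBg
  have hifh := hmul hcf hch hBf hBh
  have hiae := hmul hca hce hBa hBe
  have hiak := hmul hca hck hBa hBk
  have hiek := hmul hce hck hBe hBk
  have hiSU : IntegrableOn (fun p => (((fun q => u q 0) p ^ 2 + (fun q => u q 1) p ^ 2) + (fun q => u q 2) p ^ 2)) (OmegaSet η) volume := (hiU0.add hiU1).add hiU2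
  have hiQ : IntegrableOn (fun p => ((((((((pdX (fun q => u q 0) p ^ 2 + pdY (fun q => u q 0) p ^ 2) + pdZ (fun q => u q 0) p ^ 2) + pdX (fun q => u q 1) p ^ 2) + pdY (fun q => u q 1) p ^ 2) + pdZ (fun q => u q 1) p ^ 2) + pdX (fun q => u q 2) p ^ 2) + pdY (fun q => u q 2) p ^ 2) + pdZ (fun q => u q 2) p ^ 2)) (OmegaSet η) volume :=
    ((((((((hia.add hib).add hic).add hid).add hie).add hif).add hig).add hih).add hik)
  have hiS3 : IntegrableOn (fun p => ((pdX (fun q => u q 0) p ^ 2 + pdY (fun q => u q 1) p ^ 2) + pdZ (fun q => u q 2) p ^ 2)) (OmegaSet η) volume := (hia.add hie).add hik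
  have hiZS : IntegrableOn (fun p => ((pdZ (fun q => u q 0) p ^ 2 + pdZ (fun q => u q 1) p ^ 2) + pdZ (fun q => u q 2) p ^ 2)) (OmegaSet η) volume := (hic.add hif).add hik
  have hiCR1 : IntegrableOn (fun p => (2 * (pdY (fun q => u q 0) p * pdX (fun q => u q 1) p) + (2 * (pdZ (fun q => u q 0) p * pdX (fun q => u q 2) p) + 2 * (pdZ (fun q => u q 1) p * pdY (fun q => u q 2) p)))) (OmegaSet η) volume :=
    (hibd.const_mul 2).add ((hicg.const_mul 2).add (hifh.const_mul 2))
  have hiCR2 : IntegrableOn (fun p => (2 * (pdX (fun q => u q 0) p * pdY (fun q => u q 1) p) + (2 * (pdX (fun q => u q 0) p * pdZ (fun q => u q 2) p) + 2 * (pdY (fun q => u q 1) p * pdZ (fun q => u q 2) p)))) (OmegaSet η) volume :=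
    (hiae.const_mul 2).add ((hiak.const_mul 2).add (hiek.const_mul 2))
  have hiCf : IntegrableOn (fun p => ((pdX (fun q => u q 0) p ^ 2 + pdY (fun q => u q 1) p ^ 2) + pdZ (fun q => u q 2) p ^ 2) + (2 * (pdY (fun q => u q 0) p * pdX (fun q => u q 1) p) + (2 * (pdZ (fun q => u q 0) p * pdX (fun q => u q 2) p) + 2 * (pdZ (fun q => u q 1) p * pdY (fun q => u q 2) p)))) (OmegaSet η) volume := hiS3.add hiCR1
  have hiTf : IntegrableOn (fun p => ((pdX (fun q => u q 0) p + pdY (fun q => u q 1) p + pdZ (fun q => u q 2) p) ^ 2)) (OmegaSet η) volume := by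
    have heq : (fun p : KornAux.E3 => ((pdX (fun q => u q 0) p + pdY (fun q => u q 1) p + pdZ (fun q => u q 2) p) ^ 2)) = (fun p => ((pdX (fun q => u q 0) p ^ 2 + pdY (fun q => u q 1) p ^ 2) + pdZ (fun q => u q 2) p ^ 2) + (2 * (pdX (fun q => u q 0) p * pdY (fun q => u q 1) p) + (2 * (pdX (fun q => u q 0) p * pdZ (fun q => u q 2) p) + 2 * (pdY (fun q => u q 1) p * pdZ (fun q => u q 2) p)))) := by
      funext p; ring
    rw [heq]
    exact hiS3.add hiCR2
  have hiU01 : IntegrableOn (fun p => (fun q => u q 0) p ^ 2 + (fun q => u q 1) p ^ 2) (OmegaSet η) volume := hiU0.add hiU1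
  have hicf2 : IntegrableOn (fun p => pdZ (fun q => u q 0) p ^ 2 + pdZ (fun q => u q 1) p ^ 2) (OmegaSet η) volume := hic.add hif
  have hi2bd : IntegrableOn (fun p => 2 * (pdY (fun q => u q 0) p * pdX (fun q => u q 1) p)) (OmegaSet η) volume := hibd.const_mul 2
  have hi2cg : IntegrableOn (fun p => 2 * (pdZ (fun q => u q 0) p * pdX (fun q => u q 2) p)) (OmegaSet η) volume := hicg.const_mul 2
  have hi2fh : IntegrableOn (fun p => 2 * (pdZ (fun q => u q 1) p * pdY (fun q => u q 2) p)) (OmegaSet η) volume := hifh.const_mul 2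
  have hi2ae : IntegrableOn (fun p => 2 * (pdX (fun q => u q 0) p * pdY (fun q => u q 1) p)) (OmegaSet η) volume := hiae.const_mul 2
  have hi2ak : IntegrableOn (fun p => 2 * (pdX (fun q => u q 0) p * pdZ (fun q => u q 2) p)) (OmegaSet η) volume := hiak.const_mul 2
  have hi2ek : IntegrableOn (fun p => 2 * (pdY (fun q => u q 1) p * pdZ (fun q => u q 2) p)) (OmegaSet η) volume := hiek.const_mul 2
  have hi2cgfh : IntegrableOn (fun p => 2 * (pdZ (fun q => u q 0) p * pdX (fun q => u q 2) p) + 2 * (pdZ (fun q => u q 1) p * pdY (fun q => u q 2) p)) (OmegaSet η) volume := hi2cg.add hi2fh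
  have hi2akek : IntegrableOn (fun p => 2 * (pdX (fun q => u q 0) p * pdZ (fun q => u q 2) p) + 2 * (pdY (fun q => u q 1) p * pdZ (fun q => u q 2) p)) (OmegaSet η) volume := hi2ak.add hi2ek
  have hiMuCf : IntegrableOn (fun p => μ * (((pdX (fun q => u q 0) p ^ 2 + pdY (fun q => u q 1) p ^ 2) + pdZ (fun q => u q 2) p ^ 2) + (2 * (pdY (fun q => u q 0) p * pdX (fun q => u q 1) p) + (2 * (pdZ (fun q => u q 0) p * pdX (fun q => u q 2) p) + 2 * (pdZ (fun q => u q 1) p * pdY (fun q => u q 2) p))))) (OmegaSet η) volume := hiCf.const_mul μ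
  have hiKTf : IntegrableOn (fun p => (lam - 2 * μ / 3) * ((pdX (fun q => u q 0) p + pdY (fun q => u q 1) p + pdZ (fun q => u q 2) p) ^ 2)) (OmegaSet η) volume := hiTf.const_mul (lam - 2 * μ / 3)
  have hiMuCfKTf : IntegrableOn (fun p => μ * (((pdX (fun q => u q 0) p ^ 2 + pdY (fun q => u q 1) p ^ 2) + pdZ (fun q => u q 2) p ^ 2) + (2 * (pdY (fun q => u q 0) p * pdX (fun q => u q 1) p) + (2 * (pdZ (fun q => u q 0) p * pdX (fun q => u q 2) p) + 2 * (pdZ (fun q => u q 1) p * pdY (fun q => u q 2) p)))) + (lam - 2 * μ / 3) * ((pdX (fun q => u q 0) p + pdY (fun q => u q 1) p + pdZ (fun q => u q 2) p) ^ 2)) (OmegaSet η) volume := hiMuCf.add hiKTf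
  -- step L : decompose left integrand
  have hL : (∫ p in OmegaSet η, ((∑ i : Fin 3, (u p i) ^ 2) + frob (jac3 u p) (jac3 u p)))
      = (∫ p in OmegaSet η, (((fun q => u q 0) p ^ 2 + (fun q => u q 1) p ^ 2) + (fun q => u q 2) p ^ 2)) + ∫ p in OmegaSet η, ((((((((pdX (fun q => u q 0) p ^ 2 + pdY (fun q => u q 0) p ^ 2) + pdZ (fun q => u q 0) p ^ 2) + pdX (fun q => u q 1) p ^ 2) + pdY (fun q => u q 1) p ^ 2) + pdZ (fun q => u q 1) p ^ 2) + pdX (fun q => u q 2) p ^ 2) + pdY (fun q => u q 2) p ^ 2) + pdZ (fun q => u q 2) p ^ 2) := by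
    rw [setIntegral_congr_fun hΩm (g := fun p => (((fun q => u q 0) p ^ 2 + (fun q => u q 1) p ^ 2) + (fun q => u q 2) p ^ 2) + ((((((((pdX (fun q => u q 0) p ^ 2 + pdY (fun q => u q 0) p ^ 2) + pdZ (fun q => u q 0) p ^ 2) + pdX (fun q => u q 1) p ^ 2) + pdY (fun q => u q 1) p ^ 2) + pdZ (fun q => u q 1) p ^ 2) + pdX (fun q => u q 2) p ^ 2) + pdY (fun q => u q 2) p ^ 2) + pdZ (fun q => u q 2) p ^ 2))
      (fun p _ => by simp [frob, jac3, Fin.sum_univ_three]; ring)]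
    exact integral_add hiSU hiQ
  have hLSU : (∫ p in OmegaSet η, (((fun q => u q 0) p ^ 2 + (fun q => u q 1) p ^ 2) + (fun q => u q 2) p ^ 2)) = (∫ p in OmegaSet η, (fun q => u q 0) p ^ 2)
      + (∫ p in OmegaSet η, (fun q => u q 1) p ^ 2) + ∫ p in OmegaSet η, (fun q => u q 2) p ^ 2 := by
    rw [integral_add hiU01 hiU2, integral_add hiU0 hiU1]
  -- Poincaré
  have hz00 : ∀ q : ℝ × ℝ, (fun q => u q 0) (q, 0) = 0 := by
    intro q
    have hnm : ((q, (0:ℝ)) : KornAux.E3) ∉ tsupport (fun p => u p 0) :=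
      fun hmem => lt_irrefl (0:ℝ) (hsupp0 hmem).1
    exact image_eq_zero_of_notMem_tsupport (f := fun p => u p 0) hnm
  have hz01 : ∀ q : ℝ × ℝ, (fun q => u q 1) (q, 0) = 0 := by
    intro q
    have hnm : ((q, (0:ℝ)) : KornAux.E3) ∉ tsupport (fun p => u p 1) :=
      fun hmem => lt_irrefl (0:ℝ) (hsupp1 hmem).1
    exact image_eq_zero_of_notMem_tsupport (f := fun p => u p 1) hnm
  have hP0 := KornAux.poincare_comp hηc hηpos hηs hsM (hv 0) hz00 hBnn
    (fun p hp => ⟨hBv0 p hp, hBc p hp⟩)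
  have hP1 := KornAux.poincare_comp hηc hηpos hηs hsM (hv 1) hz01 hBnn
    (fun p hp => ⟨hBv1 p hp, hBf p hp⟩)
  have hP2 := KornAux.poincare_comp hηc hηpos hηs hsM (hv 2) hu30 hBnn
    (fun p hp => ⟨hBv2 p hp, hBk p hp⟩)
  have hZSsplit : (∫ p in OmegaSet η, ((pdZ (fun q => u q 0) p ^ 2 + pdZ (fun q => u q 1) p ^ 2) + pdZ (fun q => u q 2) p ^ 2)) = (∫ p in OmegaSet η, pdZ (fun q => u q 0) p ^ 2)
      + (∫ p in OmegaSet η, pdZ (fun q => u q 1) p ^ 2) + ∫ p in OmegaSet η, pdZ (fun q => u q 2) p ^ 2 := by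
    rw [integral_add hicf2 hik, integral_add hic hif]
  have hZSleQ : (∫ p in OmegaSet η, ((pdZ (fun q => u q 0) p ^ 2 + pdZ (fun q => u q 1) p ^ 2) + pdZ (fun q => u q 2) p ^ 2)) ≤ ∫ p in OmegaSet η, ((((((((pdX (fun q => u q 0) p ^ 2 + pdY (fun q => u q 0) p ^ 2) + pdZ (fun q => u q 0) p ^ 2) + pdX (fun q => u q 1) p ^ 2) + pdY (fun q => u q 1) p ^ 2) + pdZ (fun q => u q 1) p ^ 2) + pdX (fun q => u q 2) p ^ 2) + pdY (fun q => u q 2) p ^ 2) + pdZ (fun q => u q 2) p ^ 2) := by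
    apply setIntegral_mono_on hiZS hiQ hΩm
    intro p hp
    nlinarith [sq_nonneg (pdX (fun q => u q 0) p), sq_nonneg (pdY (fun q => u q 0) p), sq_nonneg (pdX (fun q => u q 1) p),
      sq_nonneg (pdY (fun q => u q 1) p), sq_nonneg (pdX (fun q => u q 2) p), sq_nonneg (pdY (fun q => u q 2) p)]
  -- frobS decomposition
  have hR : (∫ p in OmegaSet η, frob (Svisc μ lam (jac3 u p)) (jac3 u p))
      = μ * (∫ p in OmegaSet η, ((((((((pdX (fun q => u q 0) p ^ 2 + pdY (fun q => u q 0) p ^ 2) + pdZ (fun q => u q 0) p ^ 2) + pdX (fun q => u q 1) p ^ 2) + pdY (fun q => u q 1) p ^ 2) + pdZ (fun q => u q 1) p ^ 2) + pdX (fun q => u q 2) p ^ 2) + pdY (fun q => u q 2) p ^ 2) + pdZ (fun q => u q 2) p ^ 2)) + (μ * (∫ p in OmegaSet η, (((pdX (fun q => u q 0) p ^ 2 + pdY (fun q => u q 1) p ^ 2) + pdZ (fun q => u q 2) p ^ 2) + (2 * (pdY (fun q => u q 0) p * pdX (fun q => u q 1) p) + (2 * (pdZ (fun q => u q 0) p *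 pdX (fun q => u q 2) p) + 2 * (pdZ (fun q => u q 1) p * pdY (fun q => u q 2) p)))))
        + (lam - 2 * μ / 3) * ∫ p in OmegaSet η, ((pdX (fun q => u q 0) p + pdY (fun q => u q 1) p + pdZ (fun q => u q 2) p) ^ 2)) := by
    rw [setIntegral_congr_fun hΩm
      (g := fun p => μ * ((((((((pdX (fun q => u q 0) p ^ 2 + pdY (fun q => u q 0) p ^ 2) + pdZ (fun q => u q 0) p ^ 2) + pdX (fun q => u q 1) p ^ 2) + pdY (fun q => u q 1) p ^ 2) + pdZ (fun q => u q 1) p ^ 2) + pdX (fun q => u q 2) p ^ 2) + pdY (fun q => u q 2) p ^ 2) + pdZ (fun q => u q 2) p ^ 2) + (μ * (((pdX (fun q => u q 0) p ^ 2 + pdY (fun q => u q 1) p ^ 2) + pdZ (fun q => u q 2) p ^ 2) + (2 * (pdY (fun q => u q 0) p * pdX (fun q => u q 1) p) + (2 * (pdZ (fun q => u q 0) p * pdX (fun q => u q 2) p) + 2 * (pdZ (fun q => u q 1) p * pdY (fun q => u q 2) p)))) + (lam - 2 * μ / 3) * ((pdX (fun q => u q 0) p + pdY (fun q => u q 1)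 p + pdZ (fun q => u q 2) p) ^ 2)))
      (fun p _ => by
        simp [Svisc, frob, jac3, Matrix.trace_fin_three, Matrix.transpose_apply,
          Matrix.one_apply, Fin.sum_univ_three]
        ring)]
    rw [integral_add (hiQ.const_mul μ) hiMuCfKTf]
    rw [integral_add hiMuCf hiKTf]
    rw [integral_const_mul, integral_const_mul, integral_const_mul]
  -- cross identities
  have hXY := KornAux.cross_XY hM0 hηc hηM (hv 1) (hperx 1) (hpery 1) hsm0 hsupp0
    (hperx 0) (hpery 0)
  have hXZ := KornAux.cross_XZ hM0 hηc hηM (hv 2) (hperx 2) hsm0 hsupp0 (hperx 0)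
  have hYZ := KornAux.cross_YZ hM0 hηc hηM (hv 2) (hpery 2) hsm1 hsupp1 (hpery 1)
  -- Cf and Tf integrals
  have hCfsplit : (∫ p in OmegaSet η, (((pdX (fun q => u q 0) p ^ 2 + pdY (fun q => u q 1) p ^ 2) + pdZ (fun q => u q 2) p ^ 2) + (2 * (pdY (fun q => u q 0) p * pdX (fun q => u q 1) p) + (2 * (pdZ (fun q => u q 0) p * pdX (fun q => u q 2) p) + 2 * (pdZ (fun q => u q 1) p * pdY (fun q => u q 2) p))))) = (∫ p in OmegaSet η, ((pdX (fun q => u q 0) p ^ 2 + pdY (fun q => u q 1) p ^ 2) + pdZ (fun q => u q 2) p ^ 2))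
      + (2 * (∫ p in OmegaSet η, pdY (fun q => u q 0) p * pdX (fun q => u q 1) p) + (2 * (∫ p in OmegaSet η, pdZ (fun q => u q 0) p * pdX (fun q => u q 2) p)
        + 2 * ∫ p in OmegaSet η, pdZ (fun q => u q 1) p * pdY (fun q => u q 2) p)) := by
    rw [integral_add hiS3 hiCR1,
      integral_add hi2bd hi2cgfh,
      integral_add hi2cg hi2fh,
      integral_const_mul, integral_const_mul, integral_const_mul]
  have hTfsplit : (∫ p in OmegaSet η, ((pdX (fun q => u q 0) p + pdY (fun q => u q 1) p + pdZ (fun q => u q 2) p) ^ 2)) = (∫ p in OmegaSet η, ((pdX (fun q => u q 0) p ^ 2 + pdY (fun q => u q 1) p ^ 2) + pdZ (fun q => u q 2) p ^ 2))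
      + (2 * (∫ p in OmegaSet η, pdX (fun q => u q 0) p * pdY (fun q => u q 1) p) + (2 * (∫ p in OmegaSet η, pdX (fun q => u q 0) p * pdZ (fun q => u q 2) p)
        + 2 * ∫ p in OmegaSet η, pdY (fun q => u q 1) p * pdZ (fun q => u q 2) p)) := by
    rw [setIntegral_congr_fun hΩm (g := fun p => ((pdX (fun q => u q 0) p ^ 2 + pdY (fun q => u q 1) p ^ 2) + pdZ (fun q => u q 2) p ^ 2) + (2 * (pdX (fun q => u q 0) p * pdY (fun q => u q 1) p) + (2 * (pdX (fun q => u q 0) p * pdZ (fun q => u q 2) p) + 2 * (pdY (fun q => u q 1) p * pdZ (fun q => u q 2) p)))) (fun p _ => by ring)]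
    rw [integral_add hiS3 hiCR2,
      integral_add hi2ae hi2akek,
      integral_add hi2ak hi2ek,
      integral_const_mul, integral_const_mul, integral_const_mul]
  have hCT : (∫ p in OmegaSet η, (((pdX (fun q => u q 0) p ^ 2 + pdY (fun q => u q 1) p ^ 2) + pdZ (fun q => u q 2) p ^ 2) + (2 * (pdY (fun q => u q 0) p * pdX (fun q => u q 1) p) + (2 * (pdZ (fun q => u q 0) p * pdX (fun q => u q 2) p) + 2 * (pdZ (fun q => u q 1) p * pdY (fun q => u q 2) p))))) = ∫ p in OmegaSet η, ((pdX (fun q => u q 0) p + pdY (fun q => u q 1) p + pdZ (fun q => u q 2) p) ^ 2) := by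
    rw [hCfsplit, hTfsplit, hXY, hXZ, hYZ]
  clear hCfsplit hTfsplit hXY hXZ hYZ
  -- nonnegativity
  have hTnn : 0 ≤ ∫ p in OmegaSet η, ((pdX (fun q => u q 0) p + pdY (fun q => u q 1) p + pdZ (fun q => u q 2) p) ^ 2) :=
    setIntegral_nonneg hΩm (fun p _ => sq_nonneg _)
  have hQnn : 0 ≤ ∫ p in OmegaSet η, ((((((((pdX (fun q => u q 0) p ^ 2 + pdY (fun q => u q 0) p ^ 2) + pdZ (fun q => u q 0) p ^ 2) + pdX (fun q => u q 1) p ^ 2) + pdY (fun q => u q 1) p ^ 2) + pdZ (fun q => u q 1) p ^ 2) + pdX (fun q => u q 2) p ^ 2) + pdY (fun q => u q 2) p ^ 2) + pdZ (fun q => u q 2) p ^ 2) := by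
    apply setIntegral_nonneg hΩm
    intro p hp
    positivity
  -- final arithmetic
  obtain ⟨IU0, hIU0⟩ : ∃ x : ℝ, x = ∫ p in OmegaSet η, (fun q => u q 0) p ^ 2 := ⟨_, rfl⟩
  obtain ⟨IU1, hIU1⟩ : ∃ x : ℝ, x = ∫ p in OmegaSet η, (fun q => u q 1) p ^ 2 := ⟨_, rfl⟩
  obtain ⟨IU2, hIU2⟩ : ∃ x : ℝ, x = ∫ p in OmegaSet η, (fun q => u q 2) p ^ 2 := ⟨_, rfl⟩
  obtain ⟨IZ0, hIZ0⟩ : ∃ x : ℝ, x = ∫ p in OmegaSet η, pdZ (fun q => u q 0) p ^ 2 := ⟨_, rfl⟩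
  obtain ⟨IZ1, hIZ1⟩ : ∃ x : ℝ, x = ∫ p in OmegaSet η, pdZ (fun q => u q 1) p ^ 2 := ⟨_, rfl⟩
  obtain ⟨IZ2, hIZ2⟩ : ∃ x : ℝ, x = ∫ p in OmegaSet η, pdZ (fun q => u q 2) p ^ 2 := ⟨_, rfl⟩
  obtain ⟨IQ, hIQ⟩ : ∃ x : ℝ, x = ∫ p in OmegaSet η, ((((((((pdX (fun q => u q 0) p ^ 2 + pdY (fun q => u q 0) p ^ 2) + pdZ (fun q => u q 0) p ^ 2) + pdX (fun q => u q 1) p ^ 2) + pdY (fun q => u q 1) p ^ 2) + pdZ (fun q => u q 1) p ^ 2) + pdX (fun q => u q 2) p ^ 2) + pdY (fun q => u q 2) p ^ 2) + pdZ (fun q => u q 2) p ^ 2) := ⟨_, rfl⟩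
  obtain ⟨ISU, hISU⟩ : ∃ x : ℝ, x = ∫ p in OmegaSet η, (((fun q => u q 0) p ^ 2 + (fun q => u q 1) p ^ 2) + (fun q => u q 2) p ^ 2) := ⟨_, rfl⟩
  obtain ⟨IZS, hIZS⟩ : ∃ x : ℝ, x = ∫ p in OmegaSet η, ((pdZ (fun q => u q 0) p ^ 2 + pdZ (fun q => u q 1) p ^ 2) + pdZ (fun q => u q 2) p ^ 2) := ⟨_, rfl⟩
  obtain ⟨IC, hIC⟩ : ∃ x : ℝ, x = ∫ p in OmegaSet η, (((pdX (fun q => u q 0) p ^ 2 + pdY (fun q => u q 1) p ^ 2) + pdZ (fun q => u q 2) p ^ 2) + (2 * (pdY (fun q => u q 0) p * pdX (fun q => u q 1) p) + (2 * (pdZ (fun q => u q 0) p * pdX (fun q => u q 2) p) + 2 * (pdZ (fun q => u q 1) p * pdY (fun q => u q 2) p)))) := ⟨_, rfl⟩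
  obtain ⟨IT, hIT⟩ : ∃ x : ℝ, x = ∫ p in OmegaSet η, ((pdX (fun q => u q 0) p + pdY (fun q => u q 1) p + pdZ (fun q => u q 2) p) ^ 2) := ⟨_, rfl⟩
  obtain ⟨IF2, hIF2⟩ : ∃ x : ℝ, x = ∫ p in OmegaSet η, frob (Svisc μ lam (jac3 u p)) (jac3 u p) :=
    ⟨_, rfl⟩
  simp only [← hIU0, ← hIU1, ← hIU2, ← hIZ0, ← hIZ1, ← hIZ2, ← hIQ, ← hISU, ← hIZS, ← hIC,
    ← hIT, ← hIF2] at hL hLSU hP0 hP1 hP2 hZSsplit hZSleQ hR hCT hTnn hQnn ⊢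
  rw [hL]
  rw [hZSsplit] at hZSleQ
  clear hIU0 hIU1 hIU2 hIZ0 hIZ1 hIZ2 hIQ hISU hIZS hIC hIT hIF2
  have hKorn : μ * IQ ≤ IF2 := by
    rw [hR, hCT]
    nlinarith [hTnn, hμ.le, hlam]
  have hQle : IQ ≤ (1 / μ) * IF2 := by
    have h1 : (1 / μ) * (μ * IQ) ≤ (1 / μ) * IF2 :=
      mul_le_mul_of_nonneg_left hKorn (by positivity)
    have h2 : (1 / μ) * (μ * IQ) = IQ := by field_simp
    linarith
  have hSUle : ISU ≤ s ^ 2 * IQ := by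
    rw [hLSU]
    nlinarith [hP0, hP1, hP2, sq_nonneg s, hZSleQ]
  have hsq1 : (1 + s ^ 2) ≤ (1 + s) ^ 2 := by nlinarith [hs0]
  calc ISU + IQ
      ≤ s ^ 2 * IQ + IQ := by linarith [hSUle]
    _ = (1 + s ^ 2) * IQ := by ring
    _ ≤ (1 + s) ^ 2 * IQ := mul_le_mul_of_nonneg_right hsq1 hQnn
    _ ≤ (1 + s) ^ 2 * ((1 / μ) * IF2) := mul_le_mul_of_nonneg_left hQle (by positivity)
    _ = 1 / μ * (1 + s) ^ 2 * IF2 := by ring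
end
end

section
/- There exists a constant C > 0 depending only on the two-dimensional flat torus Γ such that every smooth function f on Γ with f ≥ 0 satisfies max_Γ f ≤ min_Γ f + C (∫_Γ |Δf|²)^{1/2}, where Δf is the Laplacian of f. -/
open MeasureTheory Real Set

noncomputable section

/-- Partial derivative in the first variable. -/
def pdx (f : ℝ × ℝ → ℝ) (q : ℝ × ℝ) : ℝ := deriv (fun t => f (t, q.2)) q.1

/-- Partial derivative in the second variable. -/
def pdy (f : ℝ × ℝ → ℝ) (q : ℝ × ℝ) : ℝ := deriv (fun t => f (q.1, t)) q.2

/-- The Laplacian `Δf = ∂²f/∂x² + ∂²f/∂y²`. -/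
def lap (f : ℝ × ℝ → ℝ) (q : ℝ × ℝ) : ℝ := pdx (pdx f) q + pdy (pdy f) q




variable {f : ℝ × ℝ → ℝ}

lemma hasDerivAt_fst (hf : ContDiff ℝ (⊤ : ℕ∞) f) (x y : ℝ) :
    HasDerivAt (fun t => f (t, y)) (fderiv ℝ f (x, y) (1, 0)) x := by
  have h1 : HasDerivAt (fun t : ℝ => (t, y)) ((1 : ℝ), (0 : ℝ)) x := by
    simpa using (hasDerivAt_id x).prodMk (hasDerivAt_const x y)
  exact (hf.differentiable (by simp) (x, y)).hasFDerivAt.comp_hasDerivAt x h1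

lemma hasDerivAt_snd (hf : ContDiff ℝ (⊤ : ℕ∞) f) (x y : ℝ) :
    HasDerivAt (fun t => f (x, t)) (fderiv ℝ f (x, y) (0, 1)) y := by
  have h1 : HasDerivAt (fun t : ℝ => (x, t)) ((0 : ℝ), (1 : ℝ)) y := by
    simpa using (hasDerivAt_const y x).prodMk (hasDerivAt_id y)
  exact (hf.differentiable (by simp) (x, y)).hasFDerivAt.comp_hasDerivAt y h1

lemma pdx_eq (hf : ContDiff ℝ (⊤ : ℕ∞) f) : pdx f = fun q => fderiv ℝ f q (1, 0) := by
  funext q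
  exact (hasDerivAt_fst hf q.1 q.2).deriv

lemma pdy_eq (hf : ContDiff ℝ (⊤ : ℕ∞) f) : pdy f = fun q => fderiv ℝ f q (0, 1) := by
  funext q
  exact (hasDerivAt_snd hf q.1 q.2).deriv

lemma contDiff_pdx (hf : ContDiff ℝ (⊤ : ℕ∞) f) : ContDiff ℝ (⊤ : ℕ∞) (pdx f) := by
  rw [pdx_eq hf]
  exact (hf.fderiv_right (by simp)).clm_apply contDiff_const

lemma contDiff_pdy (hf : ContDiff ℝ (⊤ : ℕ∞) f) : ContDiff ℝ (⊤ : ℕ∞) (pdy f) := by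
  rw [pdy_eq hf]
  exact (hf.fderiv_right (by simp)).clm_apply contDiff_const

lemma hasDerivAt_pdx (hf : ContDiff ℝ (⊤ : ℕ∞) f) (x y : ℝ) :
    HasDerivAt (fun t => f (t, y)) (pdx f (x, y)) x := by
  rw [pdx_eq hf]; exact hasDerivAt_fst hf x y

lemma hasDerivAt_pdy (hf : ContDiff ℝ (⊤ : ℕ∞) f) (x y : ℝ) :
    HasDerivAt (fun t => f (x, t)) (pdy f (x, y)) y := by
  rw [pdy_eq hf]; exact hasDerivAt_snd hf x y

-- symmetry of second derivatives
lemma pdx_pdy_symm (hf : ContDiff ℝ (⊤ : ℕ∞) f) : pdx (pdy f) = pdy (pdx f) := by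
  funext q
  obtain ⟨x, y⟩ := q
  rw [pdx_eq (contDiff_pdy hf), pdy_eq (contDiff_pdx hf), pdy_eq hf, pdx_eq hf]
  simp only
  have hd : ∀ z, HasFDerivAt f (fderiv ℝ f z) z := fun z =>
    (hf.differentiable (by simp) z).hasFDerivAt
  have h2 : HasFDerivAt (fderiv ℝ f) (fderiv ℝ (fderiv ℝ f) (x, y)) (x, y) :=
    (((hf.fderiv_right (m := (⊤ : ℕ∞)) (by simp)).differentiable (by simp)) (x, y)).hasFDerivAt
  have hsymm := second_derivative_symmetric_of_eventually (Filter.Eventually.of_forall hd) h2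
    ((1 : ℝ), (0 : ℝ)) ((0 : ℝ), (1 : ℝ))
  have e1 : fderiv ℝ (fun q : ℝ × ℝ => fderiv ℝ f q (0, 1)) (x, y) (1, 0)
      = fderiv ℝ (fderiv ℝ f) (x, y) (1, 0) (0, 1) := by
    rw [fderiv_clm_apply (((hf.fderiv_right (m := (⊤ : ℕ∞)) (by simp)).differentiable (by simp)) (x, y))
      (differentiableAt_const _)]
    simp
  have e2 : fderiv ℝ (fun q : ℝ × ℝ => fderiv ℝ f q (1, 0)) (x, y) (0, 1)
      = fderiv ℝ (fderiv ℝ f) (x, y) (0, 1) (1, 0) := by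
    rw [fderiv_clm_apply (((hf.fderiv_right (m := (⊤ : ℕ∞)) (by simp)).differentiable (by simp)) (x, y))
      (differentiableAt_const _)]
    simp
  rw [e1, e2, hsymm]


lemma periodic_pdx (hf : PeriodicTorus f) : PeriodicTorus (pdx f) := by
  constructor
  · intro x y
    have hp : (fun t => f (t + 1, y)) = fun t => f (t, y) := funext fun t => hf.1 t y
    simp only [pdx]
    rw [← deriv_comp_add_const (fun t => f (t, y)) 1, hp]
  · intro x y
    have : (fun t => f (t, y + 1)) = fun t => f (t, y) := funext fun t => hf.2 t y
    simp [pdx, this]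

lemma periodic_pdy (hf : PeriodicTorus f) : PeriodicTorus (pdy f) := by
  constructor
  · intro x y
    have : (fun t => f (x + 1, t)) = fun t => f (x, t) := funext fun t => hf.1 x t
    simp [pdy, this]
  · intro x y
    have hp : (fun t => f (x, t + 1)) = fun t => f (x, t) := funext fun t => hf.2 x t
    simp only [pdy]
    rw [← deriv_comp_add_const (fun t => f (x, t)) 1, hp]

-- FTC in each variable
lemma sub_eq_integral_pdx (hf : ContDiff ℝ (⊤ : ℕ∞) f) (a b y : ℝ) :
    f (b, y) - f (a, y) = ∫ s in a..b, pdx f (s, y) := by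
  rw [intervalIntegral.integral_eq_sub_of_hasDerivAt
    (fun s _ => hasDerivAt_pdx hf s y) ?_]
  exact ((contDiff_pdx hf).continuous.comp (by fun_prop)).intervalIntegrable a b

lemma sub_eq_integral_pdy (hf : ContDiff ℝ (⊤ : ℕ∞) f) (x a b : ℝ) :
    f (x, b) - f (x, a) = ∫ t in a..b, pdy f (x, t) := by
  rw [intervalIntegral.integral_eq_sub_of_hasDerivAt
    (fun t _ => hasDerivAt_pdy hf x t) ?_]
  exact ((contDiff_pdy hf).continuous.comp (by fun_prop)).intervalIntegrable a b

-- parametric continuity of inner integrals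
lemma contParam {g : ℝ × ℝ → ℝ} (hg : Continuous g) :
    Continuous fun s => ∫ t in (0:ℝ)..1, g (s, t) := by
  apply intervalIntegral.continuous_parametric_intervalIntegral_of_continuous'
    (f := fun s t => g (s, t))
  exact hg.comp continuous_id

lemma contParam' {g : ℝ × ℝ → ℝ} (hg : Continuous g) :
    Continuous fun t => ∫ s in (0:ℝ)..1, g (s, t) := by
  apply intervalIntegral.continuous_parametric_intervalIntegral_of_continuous'
    (f := fun t s => g (s, t))
  exact hg.comp (continuous_swap)

-- integrability on products
lemma integrableOn_prod {g : ℝ × ℝ → ℝ} (hg : Continuous g) (a b c d : ℝ) :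
    IntegrableOn g (Ioc a b ×ˢ Ioc c d) volume := by
  apply ((hg.continuousOn).integrableOn_compact (isCompact_Icc.prod isCompact_Icc)).mono_set
  exact Set.prod_mono Ioc_subset_Icc_self Ioc_subset_Icc_self

-- Fubini swap for iterated interval integrals, general outer interval
lemma swapInt {g : ℝ × ℝ → ℝ} (hg : Continuous g) (a b : ℝ) (hab : a ≤ b) :
    ∫ s in a..b, ∫ t in (0:ℝ)..1, g (s, t) = ∫ t in (0:ℝ)..1, ∫ s in a..b, g (s, t) := by
  simp only [intervalIntegral.integral_of_le hab, intervalIntegral.integral_of_le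
    (zero_le_one (α := ℝ))]
  apply MeasureTheory.integral_integral_swap
  rw [Measure.prod_restrict]
  have h := integrableOn_prod hg a b 0 1
  rw [IntegrableOn, Measure.volume_eq_prod] at h
  exact h

lemma swapInt' {g : ℝ × ℝ → ℝ} (hg : Continuous g) (a b : ℝ) :
    ∫ s in a..b, ∫ t in (0:ℝ)..1, g (s, t) = ∫ t in (0:ℝ)..1, ∫ s in a..b, g (s, t) := by
  rcases le_total a b with h | h
  · exact swapInt hg a b h
  · rw [intervalIntegral.integral_symm b a, swapInt hg b a h]
    rw [← intervalIntegral.integral_neg]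
    congr 1; funext t
    rw [intervalIntegral.integral_symm b a]

lemma swap01 {g : ℝ × ℝ → ℝ} (hg : Continuous g) :
    ∫ s in (0:ℝ)..1, ∫ t in (0:ℝ)..1, g (s, t) = ∫ t in (0:ℝ)..1, ∫ s in (0:ℝ)..1, g (s, t) :=
  swapInt hg 0 1 zero_le_one

def Dint (g : ℝ × ℝ → ℝ) : ℝ := ∫ s in (0:ℝ)..1, ∫ t in (0:ℝ)..1, g (s, t)

lemma contParamAB {g : ℝ × ℝ → ℝ} (hg : Continuous g) (a b : ℝ) :
    Continuous fun t => ∫ s in a..b, g (s, t) := by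
  apply intervalIntegral.continuous_parametric_intervalIntegral_of_continuous'
    (f := fun t s => g (s, t))
  exact hg.comp continuous_swap

lemma Dint_nonneg {g : ℝ × ℝ → ℝ} (hg : ∀ q, 0 ≤ g q) : 0 ≤ Dint g := by
  apply intervalIntegral.integral_nonneg zero_le_one
  intro s _
  exact intervalIntegral.integral_nonneg zero_le_one (fun t _ => hg (s, t))

variable {f : ℝ × ℝ → ℝ}

-- |∫ σ in u..s, h σ| ≤ ∫ σ in 0..1, |h σ| when u, s ∈ [0,1]
lemma abs_intervalIntegral_le {h : ℝ → ℝ} (hc : Continuous h) {u s : ℝ}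
    (hu : u ∈ Icc (0:ℝ) 1) (hs : s ∈ Icc (0:ℝ) 1) :
    |∫ σ in u..s, h σ| ≤ ∫ σ in (0:ℝ)..1, |h σ| := by
  have h1 : |∫ σ in u..s, h σ| ≤ ∫ σ in Set.uIoc u s, |h σ| := by
    simpa [Real.norm_eq_abs] using intervalIntegral.norm_integral_le_integral_norm_uIoc
      (f := h) (a := u) (b := s) (μ := volume)
  refine h1.trans ?_
  rw [intervalIntegral.integral_of_le zero_le_one]
  apply setIntegral_mono_set
  · exact (hc.abs.continuousOn.integrableOn_compact isCompact_Icc).mono_set Ioc_subset_Icc_self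
  · exact Filter.Eventually.of_forall fun σ => abs_nonneg _
  · apply HasSubset.Subset.eventuallyLE
    intro σ hσ
    rw [Set.uIoc, Set.mem_Ioc] at hσ
    exact ⟨lt_of_le_of_lt (le_min hu.1 hs.1) hσ.1, le_trans hσ.2 (max_le hu.2 hs.2)⟩

section
variable (hf : ContDiff ℝ (⊤ : ℕ∞) f) (hper : PeriodicTorus f)
include hf hper

lemma int_pdx_zero (t : ℝ) : ∫ s in (0:ℝ)..1, pdx f (s, t) = 0 := by
  rw [← sub_eq_integral_pdx hf]
  have := hper.1 0 t
  rw [zero_add] at this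
  rw [this, sub_self]

lemma Gbound {x : ℝ} (hx : x ∈ Icc (0:ℝ) 1) :
    |∫ t in (0:ℝ)..1, pdx f (x, t)| ≤ Dint (fun q => |pdx (pdx f) q|) := by
  set G := fun s => ∫ t in (0:ℝ)..1, pdx f (s, t) with hG
  have hxc : Continuous (pdx f) := (contDiff_pdx hf).continuous
  have hxxc : Continuous (pdx (pdx f)) := (contDiff_pdx (contDiff_pdx hf)).continuous
  have hGc : Continuous G := contParam hxc
  have hmean : ∫ u in (0:ℝ)..1, G u = 0 := by
    rw [hG]
    rw [swap01 hxc]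
    simp [int_pdx_zero hf hper]
  have key : ∀ u ∈ Icc (0:ℝ) 1, |G x - G u| ≤ Dint (fun q => |pdx (pdx f) q|) := by
    intro u hu
    have cx : Continuous fun t => pdx f (x, t) := hxc.comp (by fun_prop)
    have cu : Continuous fun t => pdx f (u, t) := hxc.comp (by fun_prop)
    have e1 : G x - G u = ∫ t in (0:ℝ)..1, (pdx f (x, t) - pdx f (u, t)) := by
      show (∫ t in (0:ℝ)..1, pdx f (x, t)) - (∫ t in (0:ℝ)..1, pdx f (u, t)) = _
      rw [intervalIntegral.integral_sub (cx.intervalIntegrable 0 1)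
        (cu.intervalIntegrable 0 1)]
    rw [e1]
    have e2 : ∀ t : ℝ, pdx f (x, t) - pdx f (u, t) = ∫ σ in u..x, pdx (pdx f) (σ, t) :=
      fun t => sub_eq_integral_pdx (contDiff_pdx hf) u x t
    calc |∫ t in (0:ℝ)..1, (pdx f (x, t) - pdx f (u, t))|
        ≤ ∫ t in (0:ℝ)..1, |pdx f (x, t) - pdx f (u, t)| := by
          apply intervalIntegral.abs_integral_le_integral_abs zero_le_one
      _ ≤ ∫ t in (0:ℝ)..1, ∫ σ in (0:ℝ)..1, |pdx (pdx f) (σ, t)| := by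
          apply intervalIntegral.integral_mono_on zero_le_one
          · apply Continuous.intervalIntegrable
            have : Continuous fun t => pdx f (x, t) - pdx f (u, t) := by fun_prop
            exact this.abs
          · exact (contParamAB hxxc.abs 0 1).intervalIntegrable 0 1
          · intro t _
            rw [e2 t]
            exact abs_intervalIntegral_le (by fun_prop) hu hx
      _ = Dint (fun q => |pdx (pdx f) q|) := (swap01 hxxc.abs).symm
  have hint : ∫ u in (0:ℝ)..1, (G x - G u) = G x := by
    rw [intervalIntegral.integral_sub (intervalIntegrable_const)
      (hGc.intervalIntegrable 0 1), hmean, sub_zero]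
    simp
  show |G x| ≤ _
  rw [← hint]
  have := intervalIntegral.norm_integral_le_of_norm_le_const
    (a := 0) (b := 1) (C := Dint (fun q => |pdx (pdx f) q|))
    (f := fun u => G x - G u) ?_
  · simpa [Real.norm_eq_abs] using this
  · intro u hu
    rw [Real.norm_eq_abs]
    exact key u (mem_Icc_of_Ioc (by rwa [Set.uIoc_of_le zero_le_one] at hu))

end

section
variable (hf : ContDiff ℝ (⊤ : ℕ∞) f) (hper : PeriodicTorus f)
include hf hper

lemma gdiff {x x' : ℝ} (hx : x ∈ Icc (0:ℝ) 1) (hx' : x' ∈ Icc (0:ℝ) 1) :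
    |(∫ t in (0:ℝ)..1, f (x, t)) - ∫ t in (0:ℝ)..1, f (x', t)|
      ≤ Dint (fun q => |pdx (pdx f) q|) := by
  have hc := hf.continuous
  have hxc : Continuous (pdx f) := (contDiff_pdx hf).continuous
  have e1 : (∫ t in (0:ℝ)..1, f (x, t)) - ∫ t in (0:ℝ)..1, f (x', t)
      = ∫ s in x'..x, ∫ t in (0:ℝ)..1, pdx f (s, t) := by
    have cx : Continuous fun t => f (x, t) := hc.comp (by fun_prop)
    have cx' : Continuous fun t => f (x', t) := hc.comp (by fun_prop)
    rw [swapInt' hxc x' x,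
      ← intervalIntegral.integral_sub (cx.intervalIntegrable 0 1) (cx'.intervalIntegrable 0 1)]
    congr 1; funext t
    exact sub_eq_integral_pdx hf x' x t
  rw [e1]
  have hb := intervalIntegral.norm_integral_le_of_norm_le_const
    (a := x') (b := x) (C := Dint (fun q => |pdx (pdx f) q|))
    (f := fun s => ∫ t in (0:ℝ)..1, pdx f (s, t)) ?_
  · rw [Real.norm_eq_abs] at hb
    refine hb.trans ?_
    have h1 : |x - x'| ≤ 1 := by
      rw [abs_le]
      constructor <;> [linarith [hx.1, hx.2, hx'.1, hx'.2]; linarith [hx.1, hx.2, hx'.1, hx'.2]]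
    nlinarith [Dint_nonneg (g := fun q => |pdx (pdx f) q|) (fun q => abs_nonneg _), abs_nonneg (x - x')]
  · intro s hs
    rw [Real.norm_eq_abs]
    apply Gbound hf hper
    rw [Set.uIoc, Set.mem_Ioc] at hs
    constructor
    · exact le_trans (le_min hx'.1 hx.1) (le_of_lt hs.1)
    · exact le_trans hs.2 (max_le hx'.2 hx.2)

end

def flipf (g : ℝ × ℝ → ℝ) : ℝ × ℝ → ℝ := fun q => g (q.2, q.1)

lemma contDiff_flipf {g : ℝ × ℝ → ℝ} (hg : ContDiff ℝ (⊤ : ℕ∞) g) : ContDiff ℝ (⊤ : ℕ∞) (flipf g) :=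
  hg.comp (contDiff_snd.prodMk contDiff_fst)

lemma periodic_flipf {g : ℝ × ℝ → ℝ} (hg : PeriodicTorus g) : PeriodicTorus (flipf g) :=
  ⟨fun x y => hg.2 y x, fun x y => hg.1 y x⟩

lemma pdx_flipf (g : ℝ × ℝ → ℝ) : pdx (flipf g) = flipf (pdy g) := rfl

lemma pdy_flipf (g : ℝ × ℝ → ℝ) : pdy (flipf g) = flipf (pdx g) := rfl

lemma abs_flipf (g : ℝ × ℝ → ℝ) : (fun q => |flipf g q|) = flipf (fun q => |g q|) := rfl

lemma Dint_flipf {g : ℝ × ℝ → ℝ} (hg : Continuous g) : Dint (flipf g) = Dint g := by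
  have hfg : Continuous (flipf g) := hg.comp continuous_swap
  exact swap01 hfg

section
variable (hf : ContDiff ℝ (⊤ : ℕ∞) f) (hper : PeriodicTorus f)
include hf hper

lemma hdiff {y y' : ℝ} (hy : y ∈ Icc (0:ℝ) 1) (hy' : y' ∈ Icc (0:ℝ) 1) :
    |(∫ s in (0:ℝ)..1, f (s, y)) - ∫ s in (0:ℝ)..1, f (s, y')|
      ≤ Dint (fun q => |pdy (pdy f) q|) := by
  have h := gdiff (contDiff_flipf hf) (periodic_flipf hper) hy hy'
  rw [pdx_flipf, pdx_flipf, abs_flipf,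
    Dint_flipf (contDiff_pdy (contDiff_pdy hf)).continuous.abs] at h
  exact h

end

lemma abs_intervalIntegral_le₂ {φ ψ : ℝ → ℝ} (hφ : Continuous φ) (hψ : Continuous ψ)
    (hle : ∀ σ ∈ Icc (0:ℝ) 1, |φ σ| ≤ ψ σ) {u s : ℝ}
    (hu : u ∈ Icc (0:ℝ) 1) (hs : s ∈ Icc (0:ℝ) 1) :
    |∫ σ in u..s, φ σ| ≤ ∫ σ in (0:ℝ)..1, ψ σ := by
  have hsub : Set.uIoc u s ⊆ Icc (0:ℝ) 1 := by
    intro σ hσ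
    rw [Set.uIoc, Set.mem_Ioc] at hσ
    exact ⟨le_of_lt (lt_of_le_of_lt (le_min hu.1 hs.1) hσ.1),
      le_trans hσ.2 (max_le hu.2 hs.2)⟩
  have h1 : |∫ σ in u..s, φ σ| ≤ ∫ σ in Set.uIoc u s, |φ σ| := by
    simpa [Real.norm_eq_abs] using intervalIntegral.norm_integral_le_integral_norm_uIoc
      (f := φ) (a := u) (b := s) (μ := volume)
  refine h1.trans ?_
  have h2 : ∫ σ in Set.uIoc u s, |φ σ| ≤ ∫ σ in Set.uIoc u s, ψ σ := by
    apply setIntegral_mono_on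
    · exact (hφ.abs.continuousOn.integrableOn_compact isCompact_Icc).mono_set hsub
    · exact (hψ.continuousOn.integrableOn_compact isCompact_Icc).mono_set hsub
    · exact measurableSet_uIoc
    · exact fun σ hσ => hle σ (hsub hσ)
  refine h2.trans ?_
  have hsub2 : Set.uIoc u s ⊆ Ioc (0:ℝ) 1 := by
    intro σ hσ
    rw [Set.uIoc, Set.mem_Ioc] at hσ
    exact ⟨lt_of_le_of_lt (le_min hu.1 hs.1) hσ.1, le_trans hσ.2 (max_le hu.2 hs.2)⟩
  rw [intervalIntegral.integral_of_le zero_le_one]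
  apply setIntegral_mono_set
  · exact (hψ.continuousOn.integrableOn_compact isCompact_Icc).mono_set Ioc_subset_Icc_self
  · rw [Filter.EventuallyLE, ae_restrict_iff' measurableSet_Ioc]
    apply Filter.Eventually.of_forall
    intro σ hσ
    exact le_trans (abs_nonneg _) (hle σ (Ioc_subset_Icc_self hσ))
  · exact HasSubset.Subset.eventuallyLE hsub2

lemma contParamVY {g : ℝ × ℝ → ℝ} (hg : Continuous g) (a b : ℝ) :
    Continuous fun s => ∫ t in a..b, g (s, t) := by
  apply intervalIntegral.continuous_parametric_intervalIntegral_of_continuous'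
    (f := fun s t => g (s, t))
  exact hg.comp continuous_id

lemma rect_bound (hf : ContDiff ℝ (⊤ : ℕ∞) f) {x y u v : ℝ}
    (hx : x ∈ Icc (0:ℝ) 1) (hy : y ∈ Icc (0:ℝ) 1)
    (hu : u ∈ Icc (0:ℝ) 1) (hv : v ∈ Icc (0:ℝ) 1) :
    |f (x, y) - f (u, y) - f (x, v) + f (u, v)| ≤ Dint (fun q => |pdy (pdx f) q|) := by
  have hxc : Continuous (pdx f) := (contDiff_pdx hf).continuous
  have hxyc : Continuous (pdy (pdx f)) := (contDiff_pdy (contDiff_pdx hf)).continuous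
  have cy : Continuous fun s => pdx f (s, y) := hxc.comp (by fun_prop)
  have cv : Continuous fun s => pdx f (s, v) := hxc.comp (by fun_prop)
  have e1 : f (x, y) - f (u, y) - f (x, v) + f (u, v)
      = ∫ s in u..x, (pdx f (s, y) - pdx f (s, v)) := by
    rw [intervalIntegral.integral_sub (cy.intervalIntegrable u x) (cv.intervalIntegrable u x),
      ← sub_eq_integral_pdx hf u x y, ← sub_eq_integral_pdx hf u x v]
    ring
  rw [e1]
  apply abs_intervalIntegral_le₂ (φ := fun s => pdx f (s, y) - pdx f (s, v))
    (ψ := fun s => ∫ t in (0:ℝ)..1, |pdy (pdx f) (s, t)|) (cy.sub cv)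
    (contParam hxyc.abs) ?_ hu hx
  intro σ _
  show |pdx f (σ, y) - pdx f (σ, v)| ≤ ∫ t in (0:ℝ)..1, |pdy (pdx f) (σ, t)|
  rw [sub_eq_integral_pdy (contDiff_pdx hf) σ v y]
  exact abs_intervalIntegral_le (hxyc.comp (by fun_prop)) hv hy

section
variable (hf : ContDiff ℝ (⊤ : ℕ∞) f) (hper : PeriodicTorus f)
include hf hper

lemma main_pointwise {x y x' y' : ℝ}
    (hx : x ∈ Icc (0:ℝ) 1) (hy : y ∈ Icc (0:ℝ) 1)
    (hx' : x' ∈ Icc (0:ℝ) 1) (hy' : y' ∈ Icc (0:ℝ) 1) :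
    f (x, y) - f (x', y') ≤ Dint (fun q => |pdx (pdx f) q|)
      + Dint (fun q => |pdy (pdy f) q|) + 2 * Dint (fun q => |pdy (pdx f) q|) := by
  have hc := hf.continuous
  set gg : ℝ → ℝ := fun x => ∫ t in (0:ℝ)..1, f (x, t) with hgg
  set hh : ℝ → ℝ := fun y => ∫ s in (0:ℝ)..1, f (s, y) with hhh
  set a : ℝ := Dint f with ha
  have hggc : Continuous gg := contParam hc
  have hhhc : Continuous hh := contParam' hc
  -- bound on the remainder r
  have rb : ∀ z w : ℝ, z ∈ Icc (0:ℝ) 1 → w ∈ Icc (0:ℝ) 1 →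
      |f (z, w) - gg z - hh w + a| ≤ Dint (fun q => |pdy (pdx f) q|) := by
    intro z w hz hw
    have rep1 : ∀ u : ℝ, (f (z, w) - f (u, w)) - gg z + gg u
        = ∫ v in (0:ℝ)..1, (f (z, w) - f (u, w) - f (z, v) + f (u, v)) := by
      intro u
      have c1 : Continuous fun v => f (z, v) := hc.comp (by fun_prop)
      have c2 : Continuous fun v => f (u, v) := hc.comp (by fun_prop)
      have : (∫ v in (0:ℝ)..1, (f (z, w) - f (u, w) - f (z, v) + f (u, v)))
          = (∫ v in (0:ℝ)..1, (f (z, w) - f (u, w) - f (z, v))) + ∫ v in (0:ℝ)..1, f (u, v) := by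
        rw [← intervalIntegral.integral_add ?_ (c2.intervalIntegrable 0 1)]
        exact (intervalIntegrable_const.sub (c1.intervalIntegrable 0 1))
      rw [this, intervalIntegral.integral_sub intervalIntegrable_const (c1.intervalIntegrable 0 1)]
      simp [hgg]
    have rep2 : f (z, w) - gg z - hh w + a
        = ∫ u in (0:ℝ)..1, ((f (z, w) - f (u, w)) - gg z + gg u) := by
      have c3 : Continuous fun u => f (u, w) := hc.comp (by fun_prop)
      have : (∫ u in (0:ℝ)..1, ((f (z, w) - f (u, w)) - gg z + gg u))
          = (∫ u in (0:ℝ)..1, ((f (z, w) - f (u, w)) - gg z)) + ∫ u in (0:ℝ)..1, gg u := by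
        rw [← intervalIntegral.integral_add ?_ (hggc.intervalIntegrable 0 1)]
        exact (intervalIntegrable_const.sub (c3.intervalIntegrable 0 1)).sub
          intervalIntegrable_const
      rw [this, intervalIntegral.integral_sub
        (intervalIntegrable_const.sub (c3.intervalIntegrable 0 1)) intervalIntegrable_const,
        intervalIntegral.integral_sub intervalIntegrable_const (c3.intervalIntegrable 0 1)]
      have e4 : (∫ u in (0:ℝ)..1, gg u) = a := rfl
      simp [hhh, e4]
      ring
    rw [rep2]
    have key := intervalIntegral.norm_integral_le_of_norm_le_const
      (a := 0) (b := 1) (C := Dint (fun q => |pdy (pdx f) q|))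
      (f := fun u => (f (z, w) - f (u, w)) - gg z + gg u) ?_
    · simpa [Real.norm_eq_abs] using key
    · intro u hu
      have hu' : u ∈ Icc (0:ℝ) 1 := mem_Icc_of_Ioc (by rwa [Set.uIoc_of_le zero_le_one] at hu)
      show |f (z, w) - f (u, w) - gg z + gg u| ≤ _
      rw [rep1 u]
      have key2 := intervalIntegral.norm_integral_le_of_norm_le_const
        (a := 0) (b := 1) (C := Dint (fun q => |pdy (pdx f) q|))
        (f := fun v => f (z, w) - f (u, w) - f (z, v) + f (u, v)) ?_
      · simpa [Real.norm_eq_abs] using key2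
      · intro v hv
        have hv' : v ∈ Icc (0:ℝ) 1 := mem_Icc_of_Ioc (by rwa [Set.uIoc_of_le zero_le_one] at hv)
        show |f (z, w) - f (u, w) - f (z, v) + f (u, v)| ≤ _
        exact rect_bound hf hz hw hu' hv'
  have d1 := gdiff hf hper hx hx'
  have d2 := hdiff hf hper hy hy'
  have r1 := rb x y hx hy
  have r2 := rb x' y' hx' hy'
  rw [abs_le] at d1 d2 r1 r2
  have : f (x, y) - f (x', y') = (gg x - gg x') + (hh y - hh y')
      + ((f (x, y) - gg x - hh y + a) - (f (x', y') - gg x' - hh y' + a)) := by ring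
  rw [this]
  linarith [d1.1, d1.2, d2.1, d2.2, r1.1, r1.2, r2.1, r2.2]

end




variable {f : ℝ × ℝ → ℝ}

lemma l1_le_sqrt_l2 {g : ℝ × ℝ → ℝ} (hg : Continuous g) :
    Dint (fun q => |g q|) ≤ Real.sqrt (Dint (fun q => (g q) ^ 2)) := by
  set A := Dint (fun q => |g q|) with hA
  set B := Dint (fun q => (g q) ^ 2) with hB
  have hBnn : 0 ≤ B := Dint_nonneg (fun q => sq_nonneg _)
  have key : ∀ c : ℝ, 0 < c → A ≤ B / (2 * c) + c / 2 := by
    intro c hc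
    have pt : ∀ q : ℝ × ℝ, |g q| ≤ (g q) ^ 2 / (2 * c) + c / 2 := by
      intro q
      have h1 : |g q| ^ 2 = (g q) ^ 2 := sq_abs _
      have h4 : |g q| ≤ ((g q) ^ 2 + c ^ 2) / (2 * c) := by
        rw [le_div_iff₀ (by positivity)]
        nlinarith [sq_nonneg (|g q| - c)]
      have h5 : ((g q) ^ 2 + c ^ 2) / (2 * c) = (g q) ^ 2 / (2 * c) + c / 2 := by
        field_simp
      linarith
    have inner_eq : ∀ s : ℝ, (∫ t in (0:ℝ)..1, ((g (s, t)) ^ 2 / (2 * c) + c / 2))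
        = (∫ t in (0:ℝ)..1, (g (s, t)) ^ 2) / (2 * c) + c / 2 := by
      intro s
      have c1 : Continuous fun t => (g (s, t)) ^ 2 / (2 * c) :=
        ((hg.comp (by fun_prop)).pow 2).div_const _
      rw [intervalIntegral.integral_add (c1.intervalIntegrable 0 1) intervalIntegrable_const,
        intervalIntegral.integral_div]
      simp
    have step1 : A ≤ ∫ s in (0:ℝ)..1, ((∫ t in (0:ℝ)..1, (g (s, t)) ^ 2) / (2 * c) + c / 2) := by
      rw [hA]
      apply intervalIntegral.integral_mono_on zero_le_one
      · exact (contParam hg.abs).intervalIntegrable 0 1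
      · exact (((contParam (hg.pow 2)).div_const _).add continuous_const).intervalIntegrable 0 1
      · intro s _
        rw [← inner_eq s]
        apply intervalIntegral.integral_mono_on zero_le_one
        · exact ((hg.comp (by fun_prop)).abs).intervalIntegrable 0 1
        · exact ((((hg.comp (by fun_prop)).pow 2).div_const _).add
            continuous_const).intervalIntegrable 0 1
        · exact fun t _ => pt (s, t)
    refine step1.trans ?_
    have c2 : Continuous fun s => (∫ t in (0:ℝ)..1, (g (s, t)) ^ 2) / (2 * c) :=
      (contParam (hg.pow 2)).div_const _
    rw [intervalIntegral.integral_add (c2.intervalIntegrable 0 1) intervalIntegrable_const,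
      intervalIntegral.integral_div]
    simp [hB, Dint]
  rcases eq_or_lt_of_le hBnn with hB0 | hBpos
  · have hA0 : A ≤ 0 := by
      apply le_of_forall_pos_le_add
      intro ε hε
      have := key ε hε
      rw [← hB0] at this
      simp at this
      linarith
    calc A ≤ 0 := hA0
      _ ≤ _ := Real.sqrt_nonneg _
  · have hs : 0 < Real.sqrt B := Real.sqrt_pos.2 hBpos
    have h2 : Real.sqrt B * Real.sqrt B = B := Real.mul_self_sqrt hBnn
    have := key (Real.sqrt B) hs
    have e : B / (2 * Real.sqrt B) + Real.sqrt B / 2 = Real.sqrt B := by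
      field_simp; nlinarith [h2]
    linarith [this, e.symm ▸ this]

lemma per_oneX {g : ℝ × ℝ → ℝ} (hg : PeriodicTorus g) (t : ℝ) : g (1, t) = g (0, t) := by
  have := hg.1 0 t; rwa [zero_add] at this

lemma per_oneY {g : ℝ × ℝ → ℝ} (hg : PeriodicTorus g) (s : ℝ) : g (s, 1) = g (s, 0) := by
  have := hg.2 s 0; rwa [zero_add] at this

section
variable (hf : ContDiff ℝ (⊤ : ℕ∞) f) (hper : PeriodicTorus f)
include hf hper

lemma it1 (t : ℝ) : ∫ s in (0:ℝ)..1, pdy (pdy f) (s, t) * pdx (pdx f) (s, t)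
    = -∫ s in (0:ℝ)..1, pdx (pdy (pdy f)) (s, t) * pdx f (s, t) := by
  have hyy := contDiff_pdy (contDiff_pdy hf)
  have h := intervalIntegral.integral_mul_deriv_eq_deriv_mul
    (a := 0) (b := 1)
    (u := fun s => pdy (pdy f) (s, t)) (u' := fun s => pdx (pdy (pdy f)) (s, t))
    (v := fun s => pdx f (s, t)) (v' := fun s => pdx (pdx f) (s, t))
    (fun s _ => hasDerivAt_pdx hyy s t)
    (fun s _ => hasDerivAt_pdx (contDiff_pdx hf) s t)
    (((contDiff_pdx hyy).continuous.comp (by fun_prop)).intervalIntegrable 0 1)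
    (((contDiff_pdx (contDiff_pdx hf)).continuous.comp (by fun_prop)).intervalIntegrable 0 1)
  have b1 : pdy (pdy f) (1, t) = pdy (pdy f) (0, t) :=
    per_oneX (periodic_pdy (periodic_pdy hper)) t
  have b2 : pdx f (1, t) = pdx f (0, t) := per_oneX (periodic_pdx hper) t
  have h' : ∫ s in (0:ℝ)..1, pdy (pdy f) (s, t) * pdx (pdx f) (s, t)
      = pdy (pdy f) (1, t) * pdx f (1, t) - pdy (pdy f) (0, t) * pdx f (0, t)
        - ∫ s in (0:ℝ)..1, pdx (pdy (pdy f)) (s, t) * pdx f (s, t) := h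
  rw [b1, b2] at h'
  rw [h']; ring

lemma it2 (s : ℝ) : ∫ t in (0:ℝ)..1, pdx f (s, t) * pdy (pdy (pdx f)) (s, t)
    = -∫ t in (0:ℝ)..1, pdy (pdx f) (s, t) * pdy (pdx f) (s, t) := by
  have hfx := contDiff_pdx hf
  have h := intervalIntegral.integral_mul_deriv_eq_deriv_mul
    (a := 0) (b := 1)
    (u := fun t => pdx f (s, t)) (u' := fun t => pdy (pdx f) (s, t))
    (v := fun t => pdy (pdx f) (s, t)) (v' := fun t => pdy (pdy (pdx f)) (s, t))
    (fun t _ => hasDerivAt_pdy hfx s t)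
    (fun t _ => hasDerivAt_pdy (contDiff_pdy hfx) s t)
    (((contDiff_pdy hfx).continuous.comp (by fun_prop)).intervalIntegrable 0 1)
    (((contDiff_pdy (contDiff_pdy hfx)).continuous.comp (by fun_prop)).intervalIntegrable 0 1)
  have b1 : pdx f (s, 1) = pdx f (s, 0) := per_oneY (periodic_pdx hper) s
  have b2 : pdy (pdx f) (s, 1) = pdy (pdx f) (s, 0) := per_oneY (periodic_pdy (periodic_pdx hper)) s
  have h' : ∫ t in (0:ℝ)..1, pdx f (s, t) * pdy (pdy (pdx f)) (s, t)
      = pdx f (s, 1) * pdy (pdx f) (s, 1) - pdx f (s, 0) * pdy (pdx f) (s, 0)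
        - ∫ t in (0:ℝ)..1, pdy (pdx f) (s, t) * pdy (pdx f) (s, t) := h
  rw [b1, b2] at h'
  rw [h']; ring

lemma third_symm : pdx (pdy (pdy f)) = pdy (pdy (pdx f)) := by
  rw [pdx_pdy_symm (contDiff_pdy hf), pdx_pdy_symm hf]

lemma parts_identity :
    Dint (fun q => pdx (pdx f) q * pdy (pdy f) q) = Dint (fun q => (pdy (pdx f) q) ^ 2) := by
  have cxx := (contDiff_pdx (contDiff_pdx hf)).continuous
  have cyy := (contDiff_pdy (contDiff_pdy hf)).continuous
  have cx := (contDiff_pdx hf).continuous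
  have cxyy := (contDiff_pdx (contDiff_pdy (contDiff_pdy hf))).continuous
  have cxy := (contDiff_pdy (contDiff_pdx hf)).continuous
  have e0 : Dint (fun q => pdx (pdx f) q * pdy (pdy f) q)
      = Dint (fun q => pdy (pdy f) q * pdx (pdx f) q) :=
    congrArg Dint (funext fun q => mul_comm _ _)
  rw [e0]
  rw [show Dint (fun q => pdy (pdy f) q * pdx (pdx f) q)
      = ∫ s in (0:ℝ)..1, ∫ t in (0:ℝ)..1, (fun q => pdy (pdy f) q * pdx (pdx f) q) (s, t)
      from rfl]
  rw [swapInt (g := fun q => pdy (pdy f) q * pdx (pdx f) q) (cyy.mul cxx) 0 1 zero_le_one]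
  have e1 : ∫ t in (0:ℝ)..1, ∫ s in (0:ℝ)..1,
      (fun q => pdy (pdy f) q * pdx (pdx f) q) ((s : ℝ), t)
      = ∫ t in (0:ℝ)..1, -∫ s in (0:ℝ)..1, pdx (pdy (pdy f)) (s, t) * pdx f (s, t) :=
    intervalIntegral.integral_congr (fun t _ => it1 hf hper t)
  rw [e1, intervalIntegral.integral_neg, ← swapInt (g := fun q => pdx (pdy (pdy f)) q * pdx f q) (cxyy.mul cx) 0 1 zero_le_one]
  have e2 : ∫ s in (0:ℝ)..1, ∫ t in (0:ℝ)..1, pdx (pdy (pdy f)) (s, t) * pdx f (s, t)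
      = ∫ s in (0:ℝ)..1, -∫ t in (0:ℝ)..1, pdy (pdx f) (s, t) * pdy (pdx f) (s, t) := by
    apply intervalIntegral.integral_congr
    intro s _
    show (∫ t in (0:ℝ)..1, pdx (pdy (pdy f)) (s, t) * pdx f (s, t))
        = -∫ t in (0:ℝ)..1, pdy (pdx f) (s, t) * pdy (pdx f) (s, t)
    rw [third_symm hf hper]
    calc (∫ t in (0:ℝ)..1, pdy (pdy (pdx f)) (s, t) * pdx f (s, t))
        = ∫ t in (0:ℝ)..1, pdx f (s, t) * pdy (pdy (pdx f)) (s, t) :=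
          intervalIntegral.integral_congr (fun t _ => mul_comm _ _)
      _ = -∫ t in (0:ℝ)..1, pdy (pdx f) (s, t) * pdy (pdx f) (s, t) := it2 hf hper s
  rw [e2, intervalIntegral.integral_neg, neg_neg]
  apply intervalIntegral.integral_congr
  intro s _
  apply intervalIntegral.integral_congr
  intro t _
  simp [sq]

end


lemma Dint_add {g h : ℝ × ℝ → ℝ} (hg : Continuous g) (hh : Continuous h) :
    Dint (fun q => g q + h q) = Dint g + Dint h := by
  rw [Dint, Dint, Dint,
    ← intervalIntegral.integral_add ((contParam hg).intervalIntegrable 0 1)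
      ((contParam hh).intervalIntegrable 0 1)]
  apply intervalIntegral.integral_congr
  intro s _
  exact intervalIntegral.integral_add ((hg.comp (by fun_prop)).intervalIntegrable 0 1)
    ((hh.comp (by fun_prop)).intervalIntegrable 0 1)

lemma Dint_smul (c : ℝ) (g : ℝ × ℝ → ℝ) :
    Dint (fun q => c * g q) = c * Dint g := by
  rw [Dint, Dint, ← intervalIntegral.integral_const_mul]
  apply intervalIntegral.integral_congr
  intro s _
  exact intervalIntegral.integral_const_mul c _

lemma set_to_iterated {g : ℝ × ℝ → ℝ} (hg : Continuous g) :
    ∫ q in Tfund, g q = Dint g := by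
  have hint : Integrable g
      ((volume.restrict (Ioo (0:ℝ) 1)).prod (volume.restrict (Ioo (0:ℝ) 1))) := by
    rw [Measure.prod_restrict]
    have h1 : IntegrableOn g (Ioo (0:ℝ) 1 ×ˢ Ioo (0:ℝ) 1) volume := by
      apply ((hg.continuousOn).integrableOn_compact (isCompact_Icc.prod isCompact_Icc)).mono_set
      exact Set.prod_mono Ioo_subset_Icc_self Ioo_subset_Icc_self
    rw [IntegrableOn, Measure.volume_eq_prod] at h1
    exact h1
  have e1 : ∫ q in Tfund, g q
      = ∫ q, g q ∂((volume.restrict (Ioo (0:ℝ) 1)).prod (volume.restrict (Ioo (0:ℝ) 1))) := by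
    rw [Measure.prod_restrict, ← Measure.volume_eq_prod]
    rfl
  rw [e1, MeasureTheory.integral_prod _ hint, Dint]
  rw [intervalIntegral.integral_of_le zero_le_one, integral_Ioc_eq_integral_Ioo]
  apply integral_congr_ae
  apply Filter.Eventually.of_forall
  intro s
  show (∫ y in Ioo (0:ℝ) 1, g (s, y)) = ∫ t in (0:ℝ)..1, g (s, t)
  rw [intervalIntegral.integral_of_le zero_le_one, integral_Ioc_eq_integral_Ioo]

lemma reduce (hper : PeriodicTorus f) (q : ℝ × ℝ) :
    ∃ p ∈ Icc (0:ℝ) 1 ×ˢ Icc (0:ℝ) 1, f p = f q := by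
  obtain ⟨x, y⟩ := q
  refine ⟨(Int.fract x, Int.fract y), ⟨⟨Int.fract_nonneg x, (Int.fract_lt_one x).le⟩,
    ⟨Int.fract_nonneg y, (Int.fract_lt_one y).le⟩⟩, ?_⟩
  have h1 : ∀ t : ℝ, f (Int.fract x, t) = f (x, t) := by
    intro t
    have hp : Function.Periodic (fun s => f (s, t)) 1 := fun s => hper.1 s t
    have h := hp.sub_int_mul_eq (x := x) ⌊x⌋
    rw [show (Int.fract x) = x - (⌊x⌋ : ℝ) * 1 from by rw [mul_one]; rfl]
    exact h
  have h2 : ∀ s : ℝ, f (s, Int.fract y) = f (s, y) := by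
    intro s
    have hp : Function.Periodic (fun t => f (s, t)) 1 := fun t => hper.2 s t
    have h := hp.sub_int_mul_eq (x := y) ⌊y⌋
    rw [show (Int.fract y) = y - (⌊y⌋ : ℝ) * 1 from by rw [mul_one]; rfl]
    exact h
  rw [h2, h1]


/-- There is `C > 0`, depending only on the torus, such that every smooth
`f ≥ 0` on the torus satisfies `max_Γ f ≤ min_Γ f + C ‖Δf‖_{L²(Γ)}`. -/
theorem max_min_laplacian_bound :
    ∃ C : ℝ, 0 < C ∧
      ∀ f : ℝ × ℝ → ℝ, ContDiff ℝ (⊤ : ℕ∞) f → PeriodicTorus f → (∀ q, 0 ≤ f q) →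
        sSup (Set.range f) ≤
          sInf (Set.range f) + C * Real.sqrt (∫ q in Tfund, (lap f q) ^ 2) := by
  refine ⟨4, by norm_num, ?_⟩
  intro f hf hper _hpos
  have cxx := (contDiff_pdx (contDiff_pdx hf)).continuous
  have cyy := (contDiff_pdy (contDiff_pdy hf)).continuous
  have cxy := (contDiff_pdy (contDiff_pdx hf)).continuous
  have claplap : Continuous fun q => (lap f q) ^ 2 := by
    have : Continuous (lap f) := cxx.add cyy
    exact this.pow 2
  set I : ℝ := ∫ q in Tfund, (lap f q) ^ 2 with hI
  have hIiter : I = Dint (fun q => (lap f q) ^ 2) := set_to_iterated claplap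
  set Sxx := Dint (fun q => (pdx (pdx f) q) ^ 2) with hSxx
  set Syy := Dint (fun q => (pdy (pdy f) q) ^ 2) with hSyy
  set Sxy := Dint (fun q => (pdy (pdx f) q) ^ 2) with hSxy
  have expand : Dint (fun q => (lap f q) ^ 2)
      = Sxx + (2 * Dint (fun q => pdx (pdx f) q * pdy (pdy f) q) + Syy) := by
    have e : (fun q => (lap f q) ^ 2)
        = fun q => (pdx (pdx f) q) ^ 2
          + (2 * (pdx (pdx f) q * pdy (pdy f) q) + (pdy (pdy f) q) ^ 2) := by
      funext q
      show (pdx (pdx f) q + pdy (pdy f) q) ^ 2 = _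
      ring
    rw [e, Dint_add (g := fun q => pdx (pdx f) q ^ 2)
      (h := fun q => 2 * (pdx (pdx f) q * pdy (pdy f) q) + pdy (pdy f) q ^ 2) (cxx.pow 2) ((continuous_const.mul (cxx.mul cyy)).add (cyy.pow 2)),
      Dint_add (g := fun q => 2 * (pdx (pdx f) q * pdy (pdy f) q))
        (h := fun q => pdy (pdy f) q ^ 2) (continuous_const.mul (cxx.mul cyy)) (cyy.pow 2), Dint_smul]
  have cross := parts_identity hf hper
  have hIsum : I = Sxx + Syy + 2 * Sxy := by
    rw [hIiter, expand, cross]; ring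
  have hSxxnn : 0 ≤ Sxx := Dint_nonneg (fun q => sq_nonneg _)
  have hSyynn : 0 ≤ Syy := Dint_nonneg (fun q => sq_nonneg _)
  have hSxynn : 0 ≤ Sxy := Dint_nonneg (fun q => sq_nonneg _)
  have bxx : Real.sqrt Sxx ≤ Real.sqrt I := Real.sqrt_le_sqrt (by linarith)
  have byy : Real.sqrt Syy ≤ Real.sqrt I := Real.sqrt_le_sqrt (by linarith)
  have bxy : Real.sqrt Sxy ≤ Real.sqrt I := Real.sqrt_le_sqrt (by linarith)
  have l1x : Dint (fun q => |pdx (pdx f) q|) ≤ Real.sqrt Sxx := l1_le_sqrt_l2 cxx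
  have l1y : Dint (fun q => |pdy (pdy f) q|) ≤ Real.sqrt Syy := l1_le_sqrt_l2 cyy
  have l1xy : Dint (fun q => |pdy (pdx f) q|) ≤ Real.sqrt Sxy := l1_le_sqrt_l2 cxy
  -- extreme points
  have hK : IsCompact (Icc (0:ℝ) 1 ×ˢ Icc (0:ℝ) 1) := isCompact_Icc.prod isCompact_Icc
  have hKne : (Icc (0:ℝ) 1 ×ˢ Icc (0:ℝ) 1).Nonempty :=
    ⟨(0, 0), by constructor <;> constructor <;> norm_num⟩
  obtain ⟨pmax, hmaxK, hmax⟩ := hK.exists_isMaxOn hKne hf.continuous.continuousOn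
  obtain ⟨pmin, hminK, hmin⟩ := hK.exists_isMinOn hKne hf.continuous.continuousOn
  have hub : ∀ z, f z ≤ f pmax := by
    intro z
    obtain ⟨p, hpK, he⟩ := reduce hper z
    rw [← he]
    exact hmax hpK
  have hlb : ∀ z, f pmin ≤ f z := by
    intro z
    obtain ⟨p, hpK, he⟩ := reduce hper z
    rw [← he]
    exact hmin hpK
  have hsup : sSup (Set.range f) ≤ f pmax := by
    apply csSup_le (Set.range_nonempty f)
    rintro b ⟨z, rfl⟩
    exact hub z
  have hinf : f pmin ≤ sInf (Set.range f) := by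
    apply le_csInf (Set.range_nonempty f)
    rintro b ⟨z, rfl⟩
    exact hlb z
  have hmp : f pmax - f pmin ≤ Dint (fun q => |pdx (pdx f) q|)
      + Dint (fun q => |pdy (pdy f) q|) + 2 * Dint (fun q => |pdy (pdx f) q|) := by
    have := main_pointwise hf hper hmaxK.1 hmaxK.2 hminK.1 hminK.2
    exact this
  have key : f pmax ≤ f pmin + 4 * Real.sqrt I := by linarith
  calc sSup (Set.range f) ≤ f pmax := hsup
    _ ≤ f pmin + 4 * Real.sqrt I := key
    _ ≤ sInf (Set.range f) + 4 * Real.sqrt I := by linarith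
end
end

section
/- Let (η_n) be a sequence of continuous functions η_n : Γ → [0,∞) on the two-dimensional flat torus Γ converging uniformly on Γ to a function η, and suppose there is M > 0 such that for every n the function ln η_n is integrable on Γ with ∫_Γ |ln η_n| ≤ M. Then the set {x ∈ Γ : η(x) = 0} has Lebesgue measure zero, and ln η is integrable on Γ. -/
/-!
Extend `t ↦ |ln t|` to `[0, ∞)` by the value `∞` at `0`; with values in `[0, ∞]` it is continuous
there, so `|ln ηₙ| → |ln η|` pointwise. Fatou's lemma then gives `∫_Γ |ln η| ≤ M < ∞`, which forces
`η ≠ 0` almost everywhere and makes `ln η` integrable.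
-/

open MeasureTheory Real Set Filter
open scoped ENNReal Topology

noncomputable section

/-- `|ln g|` as an extended-real-valued function (equal to `∞` where `g = 0`). -/
def absLogE (g : ℝ × ℝ → ℝ) (q : ℝ × ℝ) : ℝ≥0∞ :=
  if g q = 0 then ⊤ else ENNReal.ofReal |Real.log (g q)|

def absLogENNReal (t : ℝ) : ℝ≥0∞ :=
  if t = 0 then ∞ else ENNReal.ofReal |log t|

lemma absLogE_apply (g : ℝ × ℝ → ℝ) (q : ℝ × ℝ) : absLogE g q = absLogENNReal (g q) := rfl

lemma measurable_absLogENNReal : Measurable absLogENNReal :=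
  Measurable.ite (measurableSet_singleton 0) measurable_const
    (ENNReal.measurable_ofReal.comp measurable_log.abs)

lemma absLogENNReal_eq_top_iff {t : ℝ} : absLogENNReal t = ∞ ↔ t = 0 := by
  by_cases ht : t = 0 <;> simp [absLogENNReal, ht]

lemma absLogENNReal_of_ne_zero {t : ℝ} (ht : t ≠ 0) :
    absLogENNReal t = ENNReal.ofReal |log t| :=
  if_neg ht

lemma tendsto_absLogENNReal_nhdsGE_zero : Tendsto absLogENNReal (𝓝[≥] 0) (𝓝 ∞) := by
  rw [← nhdsGT_sup_nhdsWithin_singleton, tendsto_sup, nhdsWithin_singleton]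
  constructor
  · have hlog : Tendsto (fun t => ENNReal.ofReal |log t|) (𝓝[>] 0) (𝓝 ∞) :=
      ENNReal.tendsto_ofReal_atTop.comp (tendsto_abs_atBot_atTop.comp tendsto_log_nhdsGT_zero)
    refine hlog.congr' ?_
    filter_upwards [self_mem_nhdsWithin] with t ht
    exact (absLogENNReal_of_ne_zero (ne_of_gt ht)).symm
  · simpa [absLogENNReal] using tendsto_pure_nhds absLogENNReal 0

lemma continuousAt_absLogENNReal {t : ℝ} (ht : t ≠ 0) : ContinuousAt absLogENNReal t := by
  have hcont : ContinuousAt (fun s => ENNReal.ofReal |log s|) t :=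
    ENNReal.continuous_ofReal.continuousAt.comp (continuousAt_log ht).abs
  refine hcont.congr ?_
  filter_upwards [eventually_ne_nhds ht] with s hs
  exact (absLogENNReal_of_ne_zero hs).symm

lemma continuousWithinAt_absLogENNReal {t : ℝ} (ht : 0 ≤ t) :
    ContinuousWithinAt absLogENNReal (Ici 0) t := by
  rcases ht.eq_or_lt with rfl | ht
  · simpa [ContinuousWithinAt, absLogENNReal] using tendsto_absLogENNReal_nhdsGE_zero
  · exact (continuousAt_absLogENNReal ht.ne').continuousWithinAt

lemma tendsto_absLogENNReal {ι : Type*} {l : Filter ι} [l.NeBot] {x : ι → ℝ} {t : ℝ}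
    (hx : Tendsto x l (𝓝 t)) (hx0 : ∀ᶠ i in l, 0 ≤ x i) :
    Tendsto (fun i => absLogENNReal (x i)) l (𝓝 (absLogENNReal t)) :=
  (continuousWithinAt_absLogENNReal (ge_of_tendsto hx hx0)).tendsto.comp
    (tendsto_nhdsWithin_iff.2 ⟨hx, hx0⟩)

lemma lintegral_le_of_tendsto {α ι : Type*} [MeasurableSpace α] {μ : Measure α}
    {l : Filter ι} [l.NeBot] [l.IsCountablyGenerated] {f : ι → α → ℝ≥0∞} {g : α → ℝ≥0∞}
    {C : ℝ≥0∞} (hf : ∀ i, AEMeasurable (f i) μ)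
    (hlim : ∀ᵐ a ∂μ, Tendsto (fun i => f i a) l (𝓝 (g a))) (hC : ∀ᶠ i in l, ∫⁻ a, f i a ∂μ ≤ C) :
    ∫⁻ a, g a ∂μ ≤ C :=
  calc ∫⁻ a, g a ∂μ = ∫⁻ a, liminf (fun i => f i a) l ∂μ :=
        lintegral_congr_ae (hlim.mono fun _ ha => ha.liminf_eq.symm)
    _ ≤ liminf (fun i => ∫⁻ a, f i a ∂μ) l := lintegral_liminf_le' hf
    _ ≤ C := liminf_le_of_frequently_le' hC.frequently

section LogIntegrable

variable {α : Type*} [MeasurableSpace α] {μ : Measure α} {g : α → ℝ}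

lemma ae_ne_zero_of_lintegral_absLogENNReal_ne_top (hg : AEMeasurable g μ)
    (hfin : ∫⁻ a, absLogENNReal (g a) ∂μ ≠ ∞) : ∀ᵐ a ∂μ, g a ≠ 0 := by
  filter_upwards [ae_lt_top' (measurable_absLogENNReal.comp_aemeasurable hg) hfin] with a ha
  exact absLogENNReal_eq_top_iff.not.1 ha.ne

lemma integrable_log_of_lintegral_absLogENNReal_ne_top (hg : AEMeasurable g μ)
    (hfin : ∫⁻ a, absLogENNReal (g a) ∂μ ≠ ∞) : Integrable (fun a => log (g a)) μ := by
  refine ⟨(measurable_log.comp_aemeasurable hg).aestronglyMeasurable, ?_⟩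
  rw [hasFiniteIntegral_iff_norm]
  calc ∫⁻ a, ENNReal.ofReal ‖log (g a)‖ ∂μ = ∫⁻ a, absLogENNReal (g a) ∂μ := by
        refine lintegral_congr_ae ?_
        filter_upwards [ae_ne_zero_of_lintegral_absLogENNReal_ne_top hg hfin] with a ha
        rw [absLogENNReal_of_ne_zero ha, norm_eq_abs]
    _ < ∞ := hfin.lt_top

end LogIntegrable

theorem limit_log_integrable_general
    (ηs : ℕ → ℝ × ℝ → ℝ) (η : ℝ × ℝ → ℝ)
    (hcont : ∀ n, Continuous (ηs n)) (hnonneg : ∀ n q, 0 ≤ ηs n q)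
    (hconv : TendstoUniformly ηs η atTop)
    (M : ℝ)
    (hint : ∀ n, (∫⁻ q in Tfund, absLogE (ηs n) q) ≤ ENNReal.ofReal M) :
    volume (Tfund ∩ {q | η q = 0}) = 0 ∧
      IntegrableOn (fun q => Real.log (η q)) Tfund := by
  have hη : AEMeasurable η (volume.restrict Tfund) :=
    (hconv.continuous (Eventually.of_forall hcont).frequently).aemeasurable
  simp only [absLogE_apply] at hint
  have hbound : ∫⁻ q in Tfund, absLogENNReal (η q) ≤ ENNReal.ofReal M :=
    lintegral_le_of_tendsto
      (fun n => (measurable_absLogENNReal.comp (hcont n).measurable).aemeasurable)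
      (ae_of_all _ fun q => tendsto_absLogENNReal (hconv.tendsto_at q) (.of_forall (hnonneg · q)))
      (.of_forall hint)
  have hfin := (hbound.trans_lt ENNReal.ofReal_lt_top).ne
  refine ⟨?_, integrable_log_of_lintegral_absLogENNReal_ne_top hη hfin⟩
  have hzero := ae_iff.1 (ae_ne_zero_of_lintegral_absLogENNReal_ne_top hη hfin)
  rw [Measure.restrict_apply' (s := Tfund) (measurableSet_Ioo.prod measurableSet_Ioo)] at hzero
  simpa only [ne_eq, not_not, inter_comm] using hzero

/-- If continuous `η_n ≥ 0` on the torus converge uniformly to `η` and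
`∫_Γ |ln η_n| ≤ M` for all `n`, then `{η = 0}` has measure zero and `ln η` is integrable
on the torus. -/
theorem limit_log_integrable
    (ηs : ℕ → ℝ × ℝ → ℝ) (η : ℝ × ℝ → ℝ)
    (hcont : ∀ n, Continuous (ηs n)) (hnonneg : ∀ n q, 0 ≤ ηs n q)
    (hper : ∀ n, PeriodicTorus (ηs n))
    (hconv : TendstoUniformly ηs η atTop)
    (M : ℝ) (hM : 0 < M)
    (hint : ∀ n, (∫⁻ q in Tfund, absLogE (ηs n) q) ≤ ENNReal.ofReal M) :
    volume (Tfund ∩ {q | η q = 0}) = 0 ∧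
      IntegrableOn (fun q => Real.log (η q)) Tfund :=
  limit_log_integrable_general ηs η hcont hnonneg hconv M hint
end
end
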